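/- arXiv:2605.03264 — 7 statements merged into one kernel-verified Lean document; each statement's English description precedes it below -/
import Mathlib

section
/- Let Z be a measurable space, n ≥ 1, p ≥ 1, and let ε, δ ∈ (0,1) and α > 0. Let θ̂ : Z^n → ℝ^p be a measurable estimator, let G ⊆ Z^n be a set such that for every X ∈ G and every neighbor X' of X one has ‖θ̂(X) − θ̂(X')‖ ≤ α, and let γ : Z^n → [0,∞) be a sub-distance to the complement of G, i.e. |γ(X) − γ(X')| ≤ D_H(X,X') for all X, X' ∈ Z^n and γ(X) > 0 implies X ∈ G. Then for any probability measure π_⊥ on ℝ^p, the ePTR mechanism built from (ε, δ, α, θ̂, γ, π_⊥) is (ε,δ)-differentially private: for all neighboring datasets X, X' and every Borel set B ⊆ ℝ^p, μ_X(B) ≤ e^ε · μ_{X'}(B) + δ. -/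
open MeasureTheory ProbabilityTheory Matrix
open scoped Classical NNReal ENNReal RealInnerProductSpace

noncomputable section

namespace EPTR

variable {Z : Type*}

/-- Hamming distance between two datasets of size `n`. -/
def hDist {n : ℕ} (X X' : Fin n → Z) : ℕ :=
  (Finset.univ.filter fun i => X i ≠ X' i).card

/-- Two datasets are neighbors if they differ in exactly one coordinate. -/
def Neighbor {n : ℕ} (X X' : Fin n → Z) : Prop := hDist X X' = 1

/-- Gaussian measure on Euclidean space with mean `m` and covariance `v • I`
(the product of one-dimensional Gaussians of variance `v`). -/
def gaussianE {ι : Type*} [Fintype ι] (m : EuclideanSpace ℝ ι) (v : ℝ≥0) :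
    Measure (EuclideanSpace ℝ ι) :=
  (Measure.pi fun i => gaussianReal (m i) v).map (MeasurableEquiv.toLp 2 (ι → ℝ))

/-- The threshold shift `M = 1 + (2/ε) log (max (1/δ) (1/ε))` of the ePTR mechanism. -/
def Mshift (ε δ : ℝ) : ℝ := 1 + 2 / ε * Real.log (max (1 / δ) (1 / ε))

/-- The release probability of the ePTR mechanism at sub-distance value `g`. -/
def relProb (ε δ g : ℝ) : ℝ :=
  Real.exp (ε * (g - Mshift ε δ) / 2) / (Real.exp (ε * (g - Mshift ε δ) / 2) + 1)

/-- The standard deviation `s = (2α/ε)√(2 log(1.25/δ))` of the ePTR Gaussian noise. -/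
def noiseSD (ε δ α : ℝ) : ℝ := 2 * α / ε * Real.sqrt (2 * Real.log (1.25 / δ))

/-- Output distribution of the ePTR mechanism on input dataset `X`
(Euclidean-space valued version). -/
def ePTR {n : ℕ} {ι : Type*} [Fintype ι] (ε δ α : ℝ)
    (θhat : (Fin n → Z) → EuclideanSpace ℝ ι) (γ : (Fin n → Z) → ℝ)
    (πbot : Measure (EuclideanSpace ℝ ι)) (X : Fin n → Z) :
    Measure (EuclideanSpace ℝ ι) :=
  ENNReal.ofReal (relProb ε δ (γ X)) • gaussianE (θhat X) (Real.toNNReal (noiseSD ε δ α ^ 2))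
    + ENNReal.ofReal (1 - relProb ε δ (γ X)) • πbot

/-- Output distribution of the ePTR mechanism on input dataset `X` (real valued version). -/
def ePTR1 {n : ℕ} (ε δ α : ℝ)
    (θhat : (Fin n → Z) → ℝ) (γ : (Fin n → Z) → ℝ)
    (πbot : Measure ℝ) (X : Fin n → Z) : Measure ℝ :=
  ENNReal.ofReal (relProb ε δ (γ X)) • gaussianReal (θhat X) (Real.toNNReal (noiseSD ε δ α ^ 2))
    + ENNReal.ofReal (1 - relProb ε δ (γ X)) • πbot

/-- `(ε, δ)`-differential privacy of a mechanism: for all neighboring datasets `X, X'`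
and all measurable events `B`, `μ_X(B) ≤ e^ε μ_{X'}(B) + δ`. -/
def IsDP {n : ℕ} {Ω : Type*} [MeasurableSpace Ω]
    (mech : (Fin n → Z) → Measure Ω) (ε δ : ℝ) : Prop :=
  ∀ X X' : Fin n → Z, Neighbor X X' → ∀ B : Set Ω, MeasurableSet B →
    mech X B ≤ ENNReal.ofReal (Real.exp ε) * mech X' B + ENNReal.ofReal δ

/-- Projection onto the closed ball of radius `a` in a normed space:
`proj a v = (a / max ‖v‖ a) • v`. -/
def proj {V : Type*} [NormedAddCommGroup V] [Module ℝ V] (a : ℝ) (v : V) : V :=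
  (a / max ‖v‖ a) • v

/-- Identification of `Fin p → ℝ` with Euclidean space. -/
def toE {p : ℕ} : (Fin p → ℝ) → EuclideanSpace ℝ (Fin p) :=
  ⇑(EuclideanSpace.equiv (Fin p) ℝ).symm

/-- ℓ²-operator norm of a square matrix. -/
def opNorm {p : ℕ} (A : Matrix (Fin p) (Fin p) ℝ) : ℝ :=
  ‖Matrix.toEuclideanCLM (𝕜 := ℝ) A‖

/-- Smallest eigenvalue of a (symmetric) matrix, via the Rayleigh quotient. -/
def lambdaMin {p : ℕ} (A : Matrix (Fin p) (Fin p) ℝ) : ℝ :=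
  ⨅ v : Metric.sphere (0 : EuclideanSpace ℝ (Fin p)) 1,
    ⟪Matrix.toEuclideanCLM (𝕜 := ℝ) A v.1, v.1⟫

/-- Index set of data points carrying label `k`. -/
def Ik {n K : ℕ} {E : Type*} (X : Fin n → E × Fin K) (k : Fin K) : Finset (Fin n) :=
  Finset.univ.filter fun j => (X j).2 = k

/-- Class-`k` sample frequency `μ̂_k = |I_k| / n`. -/
def classFreq {n K : ℕ} {E : Type*} (X : Fin n → E × Fin K) (k : Fin K) : ℝ :=
  (Ik X k).card / n

/-- Class-`k` sample mean (equal to `0` if the class is empty). -/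
def classMean {n K p : ℕ} (X : Fin n → EuclideanSpace ℝ (Fin p) × Fin K) (k : Fin K) :
    EuclideanSpace ℝ (Fin p) :=
  ((Ik X k).card : ℝ)⁻¹ • ∑ j ∈ Ik X k, (X j).1

/-- The sub-distance of the ePTR Bayes classifier:
`γ(X) = max(min_k |I_k(X)| - c₀ n - 1, 0)`. -/
def gammaBC {n K : ℕ} {E : Type*} (c0 : ℝ) (X : Fin n → E × Fin K) : ℝ :=
  max (((⨅ k : Fin K, (Ik X k).card : ℕ) : ℝ) - c0 * n - 1) 0

end EPTR

/-!
The output law is the mixture `p(X) • N(θ̂(X), s²) + (1 - p(X)) • π_⊥` with the logistic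
release probability `p(X) = σ(ε (γ(X) - M) / 2)`. As `γ` is `1`-Lipschitz for the Hamming
distance, both `p` and `1 - p` change by a factor at most `e^{ε/2}` between neighbours.
If `γ(X) ≤ 1`, the shift `M` makes `p(X) ≤ δ`, so the Gaussian component costs at most `δ`.
Otherwise `X ∈ G`, the two means are `α`-close, and the Gaussian mechanism with noise `s` is
`(ε/2, δ)`-indistinguishable; the two factors `e^{ε/2}` multiply to `e^ε`.

For means `a, b` and `u = a - b`, the density ratio of `N(a, s²)` to `N(b, s²)` at `x` is
`exp ((2 ⟪u, x - a⟫ + ‖u‖²) / (2 s²))`, which is at most `e^{ε/2}` outside a half-space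
`{c < ⟪u, x - a⟫}`. Moving the mean to the boundary of that half-space bounds its mass by the
Chernoff factor `exp (-c² / (2 s² ‖u‖²))` times the mass of a half-space through the mean,
which is at most `1/2` by symmetry.
-/

open Real

namespace ProbabilityTheory

variable {ι : Type*} [Fintype ι] {v : ℝ≥0}

abbrev piGaussian (m : ι → ℝ) (v : ℝ≥0) : Measure (ι → ℝ) :=
  Measure.pi fun i => gaussianReal (m i) v

lemma withDensity_apply_le_mul {α : Type*} [MeasurableSpace α] {ρ : Measure α}
    {f g : α → ℝ≥0∞} (hg : Measurable g) {A : Set α} (hA : MeasurableSet A) {c : ℝ≥0∞}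
    (h : ∀ x ∈ A, f x ≤ c * g x) :
    ρ.withDensity f A ≤ c * ρ.withDensity g A := by
  rw [withDensity_apply _ hA, withDensity_apply _ hA, ← lintegral_const_mul _ hg]
  exact setLIntegral_mono (hg.const_mul c) h

lemma measure_setOf_pos_le_half {α : Type*} [MeasurableSpace α] {μ : Measure α}
    [IsProbabilityMeasure μ] {R : α → α} (hR : MeasurePreserving R μ μ)
    {f : α → ℝ} (hf : Measurable f) (hfR : ∀ x, f (R x) = -f x) :
    μ {x | 0 < f x} ≤ 2⁻¹ := by
  have hsymm : μ {x | f x < 0} = μ {x | 0 < f x} := by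
    rw [← hR.measure_preimage (measurableSet_lt measurable_const hf).nullMeasurableSet]
    congr 1
    ext x
    simp [hfR]
  have hdisj : Disjoint {x | 0 < f x} {x | f x < 0} :=
    Set.disjoint_left.2 fun x (h₁ : 0 < f x) (h₂ : f x < 0) => lt_asymm h₁ h₂
  rw [ENNReal.le_inv_iff_mul_le, mul_two]
  nth_rewrite 2 [← hsymm]
  rw [← measure_union hdisj (measurableSet_lt hf measurable_const)]
  exact prob_le_one

lemma piGaussian_eq_withDensity (m : ι → ℝ) (hv : v ≠ 0) :
    piGaussian m v
      = volume.withDensity fun x => ENNReal.ofReal (∏ i, gaussianPDFReal (m i) v (x i)) := by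
  refine Measure.pi_eq fun s hs => ?_
  have hint : ∀ i, Integrable (gaussianPDFReal (m i) v) ((volume : Measure ℝ).restrict (s i)) :=
    fun i => (integrable_gaussianPDFReal _ _).restrict
  rw [withDensity_apply _ (MeasurableSet.univ_pi hs), volume_pi, Measure.restrict_pi_pi,
    ← ofReal_integral_eq_lintegral_ofReal (Integrable.fintype_prod hint)
      (ae_of_all _ fun x => Finset.prod_nonneg fun i _ => gaussianPDFReal_nonneg _ _ _),
    integral_fintype_prod_eq_prod,
    ENNReal.ofReal_prod_of_nonneg fun i _ => setIntegral_nonneg (hs i) fun x _ =>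
      gaussianPDFReal_nonneg _ _ _]
  exact Finset.prod_congr rfl fun i _ => (gaussianReal_apply_eq_integral _ hv _).symm

lemma gaussianPDFReal_eq_exp_mul (a b : ℝ) (v : ℝ≥0) (x : ℝ) :
    gaussianPDFReal a v x
      = exp ((2 * (a - b) * (x - a) + (a - b) ^ 2) / (2 * v)) * gaussianPDFReal b v x := by
  simp only [gaussianPDFReal]
  rw [mul_left_comm, ← exp_add]
  congr 2
  ring

lemma prod_gaussianPDFReal_eq_exp_mul (a b x : ι → ℝ) (v : ℝ≥0) :
    ∏ i, gaussianPDFReal (a i) v (x i)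
      = exp ((2 * (a - b) ⬝ᵥ (x - a) + (a - b) ⬝ᵥ (a - b)) / (2 * v))
        * ∏ i, gaussianPDFReal (b i) v (x i) := by
  rw [Finset.prod_congr rfl fun i _ => gaussianPDFReal_eq_exp_mul (a i) (b i) v (x i),
    Finset.prod_mul_distrib, ← exp_sum, ← Finset.sum_div]
  simp only [dotProduct, Finset.mul_sum, ← Finset.sum_add_distrib, Pi.sub_apply]
  congr 3
  exact Finset.sum_congr rfl fun i _ => by ring

lemma piGaussian_le_exp_mul (a b : ι → ℝ) (hv : v ≠ 0) {A : Set (ι → ℝ)}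
    (hA : MeasurableSet A) {K : ℝ}
    (hK : ∀ x ∈ A, (2 * (a - b) ⬝ᵥ (x - a) + (a - b) ⬝ᵥ (a - b)) / (2 * v) ≤ K) :
    piGaussian a v A ≤ ENNReal.ofReal (exp K) * piGaussian b v A := by
  rw [piGaussian_eq_withDensity a hv, piGaussian_eq_withDensity b hv]
  refine withDensity_apply_le_mul (by fun_prop) hA fun x hx => ?_
  rw [← ENNReal.ofReal_mul (exp_nonneg K), prod_gaussianPDFReal_eq_exp_mul a b]
  gcongr
  · exact Finset.prod_nonneg fun i _ => gaussianPDFReal_nonneg _ _ _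
  · exact hK x hx

lemma piGaussian_map_add_const (m w : ι → ℝ) (v : ℝ≥0) :
    (piGaussian m v).map (· + w) = piGaussian (m + w) v :=
  (measurePreserving_pi _ _ fun i =>
    ⟨measurable_add_const (w i), gaussianReal_map_add_const (w i)⟩).map_eq

lemma measurePreserving_two_nsmul_sub_piGaussian (m : ι → ℝ) (v : ℝ≥0) :
    MeasurePreserving (fun x => 2 • m - x) (piGaussian m v) (piGaussian m v) := by
  have hm : piGaussian m v = piGaussian (2 • m - m) v := by rw [two_nsmul, add_sub_cancel_right]
  nth_rewrite 2 [hm]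
  exact measurePreserving_pi _ _ fun i =>
    ⟨measurable_const_sub _, gaussianReal_map_const_sub ((2 • m) i)⟩

lemma piGaussian_tail_le (a u : ι → ℝ) (hv : v ≠ 0) (hu : u ≠ 0) {c : ℝ} (hc : 0 ≤ c) :
    piGaussian a v {x | c < u ⬝ᵥ (x - a)}
      ≤ ENNReal.ofReal (exp (-c ^ 2 / (2 * v * (u ⬝ᵥ u))) / 2) := by
  set r2 := u ⬝ᵥ u
  have hr2 : 0 < r2 := by simpa only [star_trivial] using dotProduct_self_star_pos_iff.2 hu
  have hf : Measurable fun x : ι → ℝ => u ⬝ᵥ (x - a) := by fun_prop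
  set T := {x | c < u ⬝ᵥ (x - a)}
  have hT : MeasurableSet T := measurableSet_lt measurable_const hf
  -- moving the mean from `a` to `a + w` puts it on the boundary of `T`
  set w := (c / r2) • u
  have huw : u ⬝ᵥ w = c := by
    rw [dotProduct_smul, smul_eq_mul, div_mul_cancel₀ c hr2.ne']
  have hshift : piGaussian a v T
      ≤ ENNReal.ofReal (exp (-c ^ 2 / (2 * v * r2))) * piGaussian (a + w) v T := by
    refine piGaussian_le_exp_mul a (a + w) hv hT fun x (hx : c < u ⬝ᵥ (x - a)) => ?_
    have hw : a - (a + w) = -(c / r2) • u := by simp [w]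
    rw [hw, smul_dotProduct, smul_dotProduct, dotProduct_smul, smul_eq_mul, smul_eq_mul,
      smul_eq_mul]
    have hmul : c / r2 * c ≤ c / r2 * u ⬝ᵥ (x - a) := by gcongr
    have hsq : -(c / r2) * (-(c / r2) * r2) = c / r2 * c := by field_simp
    calc (2 * (-(c / r2) * u ⬝ᵥ (x - a)) + -(c / r2) * (-(c / r2) * r2)) / (2 * v)
        ≤ (-(2 * (c / r2 * c)) + c / r2 * c) / (2 * v) := by
          rw [hsq]
          exact div_le_div_of_nonneg_right (by linarith) (by positivity)
      _ = -c ^ 2 / (2 * v * r2) := by field_simp; ring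
  have hhalf : piGaussian (a + w) v T ≤ 2⁻¹ := by
    have hpre : (· + w) ⁻¹' T = {x | 0 < u ⬝ᵥ (x - a)} := by
      ext x
      simp only [T, Set.mem_preimage, Set.mem_ofPred_eq, add_sub_right_comm, dotProduct_add,
        huw, lt_add_iff_pos_left]
    rw [← piGaussian_map_add_const a w v, Measure.map_apply (measurable_add_const w) hT, hpre]
    refine measure_setOf_pos_le_half (measurePreserving_two_nsmul_sub_piGaussian a v) hf
      fun x => ?_
    rw [← dotProduct_neg, two_nsmul]
    congr 1
    abel
  calc piGaussian a v T
      ≤ ENNReal.ofReal (exp (-c ^ 2 / (2 * v * r2))) * 2⁻¹ := hshift.trans (by gcongr)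
    _ = ENNReal.ofReal (exp (-c ^ 2 / (2 * v * r2)) / 2) := by
      rw [ENNReal.ofReal_div_of_pos two_pos, ENNReal.ofReal_ofNat, ENNReal.div_eq_inv_mul,
        mul_comm]

lemma piGaussian_le_exp_mul_add_tail (a b : ι → ℝ) (hv : v ≠ 0) (c : ℝ)
    {B : Set (ι → ℝ)} (hB : MeasurableSet B) :
    piGaussian a v B
      ≤ ENNReal.ofReal (exp ((2 * c + (a - b) ⬝ᵥ (a - b)) / (2 * v))) * piGaussian b v B
        + piGaussian a v {x | c < (a - b) ⬝ᵥ (x - a)} := by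
  set T := {x | c < (a - b) ⬝ᵥ (x - a)}
  have hT : MeasurableSet T := measurableSet_lt measurable_const (by fun_prop)
  have hgood : piGaussian a v (B \ T)
      ≤ ENNReal.ofReal (exp ((2 * c + (a - b) ⬝ᵥ (a - b)) / (2 * v))) * piGaussian b v B := by
    refine (piGaussian_le_exp_mul a b hv (hB.diff hT) fun x hx => ?_).trans
      (by gcongr; exact Set.sdiff_subset)
    have hx : (a - b) ⬝ᵥ (x - a) ≤ c := not_lt.1 hx.2
    gcongr
  calc piGaussian a v B ≤ piGaussian a v (B ∩ T) + piGaussian a v (B \ T) :=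
        measure_le_inter_add_sdiff _ _ _
    _ ≤ _ := by
      rw [add_comm]
      exact add_le_add hgood (measure_mono Set.inter_subset_right)

end ProbabilityTheory

namespace Real

lemma sigmoid_le_exp_mul_sigmoid {s t k : ℝ} (hk : 0 ≤ k) (h : s ≤ t + k) :
    sigmoid s ≤ exp k * sigmoid t := by
  have hk' : exp (-k) ≤ 1 := exp_le_one_iff.2 (neg_nonpos.2 hk)
  calc sigmoid s ≤ sigmoid (t + k) := sigmoid_le h
    _ = (1 + exp (-t) * exp (-k))⁻¹ := by rw [sigmoid_def, neg_add, exp_add]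
    _ ≤ (exp (-k) * (1 + exp (-t)))⁻¹ :=
      inv_anti₀ (by positivity) (by nlinarith [exp_pos (-t)])
    _ = exp k * sigmoid t := by rw [mul_inv, exp_neg, inv_inv, sigmoid_def]

lemma sigmoid_le_exp (t : ℝ) : sigmoid t ≤ exp t := by
  rw [sigmoid_def, ← inv_inv (exp t), ← exp_neg]
  exact inv_anti₀ (exp_pos _) (le_add_of_nonneg_left zero_le_one)

end Real

namespace EPTR

lemma one_fifth_lt_log_div {δ : ℝ} (hδ0 : 0 < δ) (hδ1 : δ < 1) :
    1 / 5 < log (1.25 / δ) := by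
  have hlog := one_sub_inv_le_log_of_pos (by positivity : 0 < 1.25 / δ)
  rw [inv_div] at hlog
  have hδ : δ / 1.25 < 4 / 5 := by rw [div_lt_iff₀ (by norm_num)]; linarith
  linarith

lemma noiseSD_sq {δ : ℝ} (ε α : ℝ) (hδ0 : 0 < δ) (hδ1 : δ < 1) :
    noiseSD ε δ α ^ 2 = 8 * α ^ 2 * log (1.25 / δ) / ε ^ 2 := by
  rw [noiseSD, mul_pow, sq_sqrt (by linarith [one_fifth_lt_log_div hδ0 hδ1])]
  ring

lemma le_mul_noiseSD_sq {ε δ α r2 : ℝ} (hε0 : 0 < ε) (hε1 : ε ≤ 1) (hδ0 : 0 < δ)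
    (hδ1 : δ < 1) (hr2 : r2 ≤ α ^ 2) : r2 ≤ ε * noiseSD ε δ α ^ 2 := by
  have hr2ε : r2 * ε ≤ α ^ 2 := by nlinarith [mul_le_mul hr2 hε1 hε0.le (sq_nonneg α)]
  have hL : α ^ 2 ≤ 8 * α ^ 2 * log (1.25 / δ) := by
    nlinarith [sq_nonneg α, one_fifth_lt_log_div hδ0 hδ1]
  rw [noiseSD_sq ε α hδ0 hδ1, mul_div_assoc', le_div_iff₀ (by positivity)]
  nlinarith [mul_le_mul_of_nonneg_left (hr2ε.trans hL) hε0.le]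

lemma exp_tail_noiseSD_le {ε δ α r2 : ℝ} (hε0 : 0 < ε) (hε1 : ε ≤ 1) (hδ0 : 0 < δ)
    (hδ1 : δ < 1) (hr2 : 0 < r2) (hr2α : r2 ≤ α ^ 2) :
    exp (-(ε * noiseSD ε δ α ^ 2 / 2 - r2 / 2) ^ 2 / (2 * noiseSD ε δ α ^ 2 * r2)) / 2
      ≤ δ := by
  have hL : 0 < log (1.25 / δ) := by linarith [one_fifth_lt_log_div hδ0 hδ1]
  have hs2 := noiseSD_sq ε α hδ0 hδ1
  set L := log (1.25 / δ)
  set s2 := noiseSD ε δ α ^ 2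
  have hα : 0 < α ^ 2 := hr2.trans_le hr2α
  have hs2pos : 0 < s2 := by rw [hs2]; positivity
  -- `(8α²L - εr2)² - 16α²L r2 (4L - 1)`
  -- `= 64α²L²(α² - r2) + 16α²L r2 (1 - ε) + (ε r2)²`
  have hexp : -(ε * s2 / 2 - r2 / 2) ^ 2 / (2 * s2 * r2) ≤ 1 / 4 - L := by
    rw [div_le_iff₀ (by positivity), hs2]
    field_simp
    nlinarith [mul_nonneg (mul_nonneg (mul_nonneg hL.le hL.le) (sub_nonneg.2 hr2α)) hα.le,
      mul_nonneg (mul_nonneg hα.le hL.le) (mul_nonneg hr2.le (sub_nonneg.2 hε1)),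
      sq_nonneg (ε * r2)]
  have hquarter : exp (1 / 4) ≤ 2 := by
    rw [← le_log_iff_exp_le two_pos]
    linarith [log_two_gt_d9]
  calc exp (-(ε * s2 / 2 - r2 / 2) ^ 2 / (2 * s2 * r2)) / 2
      ≤ exp (1 / 4 - L) / 2 := by gcongr
    _ = exp (1 / 4) * (δ / 1.25) / 2 := by
      rw [exp_sub, exp_log (by positivity), div_div_eq_mul_div, mul_div_assoc]
    _ ≤ 2 * (δ / 1.25) / 2 := by gcongr
    _ = δ / 1.25 := by ring
    _ ≤ δ := div_le_self hδ0.le (by norm_num)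

lemma piGaussian_noiseSD_le {ι : Type*} [Fintype ι] {ε δ α : ℝ} (hε0 : 0 < ε)
    (hε1 : ε ≤ 1) (hδ0 : 0 < δ) (hδ1 : δ < 1) {a b : ι → ℝ}
    (hab : (a - b) ⬝ᵥ (a - b) ≤ α ^ 2)
    {B : Set (ι → ℝ)} (hB : MeasurableSet B) :
    piGaussian a (noiseSD ε δ α ^ 2).toNNReal B
      ≤ ENNReal.ofReal (exp (ε / 2)) * piGaussian b (noiseSD ε δ α ^ 2).toNNReal B
        + ENNReal.ofReal δ := by
  rcases eq_or_ne a b with rfl | hne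
  · exact le_add_right
      (le_mul_of_one_le_left' (ENNReal.one_le_ofReal.2 (one_le_exp (by positivity))))
  set r2 := (a - b) ⬝ᵥ (a - b)
  have hr2 : 0 < r2 := by
    simpa only [star_trivial] using dotProduct_self_star_pos_iff.2 (sub_ne_zero.2 hne)
  have hc := le_mul_noiseSD_sq hε0 hε1 hδ0 hδ1 hab
  set s2 := noiseSD ε δ α ^ 2
  have hs2 : 0 < s2 := pos_of_mul_pos_right (hr2.trans_le hc) hε0.le
  have hv : (s2.toNNReal : ℝ) = s2 := Real.coe_toNNReal _ hs2.le
  have hv0 : s2.toNNReal ≠ 0 := (Real.toNNReal_pos.2 hs2).ne'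
  -- the threshold `c` is chosen so that the density ratio off the tail is `e^{ε/2}`
  set c := ε * s2 / 2 - r2 / 2 with hc_def
  have hK : (2 * c + r2) / (2 * s2) = ε / 2 := by field_simp; ring
  have htail := piGaussian_tail_le a (a - b) hv0 (sub_ne_zero.2 hne) (c := c)
    (by rw [hc_def]; linarith)
  rw [hv] at htail
  calc _ ≤ _ := piGaussian_le_exp_mul_add_tail a b hv0 c hB
    _ ≤ _ := by
      rw [hv, hK]
      gcongr
      exact htail.trans (ENNReal.ofReal_le_ofReal (exp_tail_noiseSD_le hε0 hε1 hδ0 hδ1 hr2 hab))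

lemma gaussianE_noiseSD_le {ι : Type*} [Fintype ι] {ε δ α : ℝ} (hε0 : 0 < ε)
    (hε1 : ε ≤ 1) (hδ0 : 0 < δ) (hδ1 : δ < 1) {a b : EuclideanSpace ℝ ι}
    (hab : ‖a - b‖ ≤ α)
    {B : Set (EuclideanSpace ℝ ι)} (hB : MeasurableSet B) :
    gaussianE a (noiseSD ε δ α ^ 2).toNNReal B
      ≤ ENNReal.ofReal (exp (ε / 2)) * gaussianE b (noiseSD ε δ α ^ 2).toNNReal B
        + ENNReal.ofReal δ := by
  have hnorm : (a.ofLp - b.ofLp) ⬝ᵥ (a.ofLp - b.ofLp) ≤ α ^ 2 := by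
    have := pow_le_pow_left₀ (norm_nonneg _) hab 2
    rw [EuclideanSpace.real_norm_sq_eq] at this
    simpa [dotProduct, sq] using this
  simp only [gaussianE, Measure.map_apply (MeasurableEquiv.measurable _) hB]
  exact piGaussian_noiseSD_le hε0 hε1 hδ0 hδ1 hnorm (MeasurableEquiv.measurable _ hB)

lemma relProb_eq_sigmoid (ε δ g : ℝ) :
    relProb ε δ g = sigmoid (ε * (g - Mshift ε δ) / 2) := by
  rw [relProb, sigmoid_def, exp_neg]
  field_simp

lemma relProb_le_one (ε δ g : ℝ) : relProb ε δ g ≤ 1 :=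
  relProb_eq_sigmoid ε δ g ▸ sigmoid_le_one _

lemma relProb_le_exp_mul {ε δ g g' : ℝ} (hε : 0 ≤ ε) (h : g ≤ g' + 1) :
    relProb ε δ g ≤ exp (ε / 2) * relProb ε δ g' := by
  rw [relProb_eq_sigmoid, relProb_eq_sigmoid]
  exact sigmoid_le_exp_mul_sigmoid (by positivity) (by nlinarith)

lemma one_sub_relProb_le_exp_mul {ε δ g g' : ℝ} (hε : 0 ≤ ε) (h : g' ≤ g + 1) :
    1 - relProb ε δ g ≤ exp (ε / 2) * (1 - relProb ε δ g') := by
  rw [relProb_eq_sigmoid, relProb_eq_sigmoid, ← sigmoid_neg, ← sigmoid_neg]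
  exact sigmoid_le_exp_mul_sigmoid (by positivity) (by nlinarith)

lemma relProb_le_of_le_one {ε δ g : ℝ} (hε : 0 < ε) (hδ : 0 < δ) (hg : g ≤ 1) :
    relProb ε δ g ≤ δ := by
  have hlog : log (1 / δ) ≤ log (max (1 / δ) (1 / ε)) :=
    log_le_log (by positivity) (le_max_left _ _)
  have ht : ε * (g - Mshift ε δ) / 2 ≤ log δ := by
    have hsplit : ε * (g - Mshift ε δ) / 2 = ε * (g - 1) / 2 - log (max (1 / δ) (1 / ε)) := by
      rw [Mshift]
      field_simp
      ring
    rw [hsplit, ← neg_neg (log δ), ← log_inv, ← one_div]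
    nlinarith
  rw [relProb_eq_sigmoid]
  calc _ ≤ exp (ε * (g - Mshift ε δ) / 2) := sigmoid_le_exp _
    _ ≤ δ := (exp_le_exp.2 ht).trans_eq (exp_log hδ)

instance {ι : Type*} [Fintype ι] (m : EuclideanSpace ℝ ι) (v : ℝ≥0) :
    IsProbabilityMeasure (gaussianE m v) :=
  Measure.isProbabilityMeasure_map (MeasurableEquiv.measurable _).aemeasurable

lemma ofReal_relProb_mul_gaussianE_le {ι : Type*} [Fintype ι] {ε δ α g g' : ℝ}
    (hε0 : 0 < ε) (hε1 : ε ≤ 1) (hδ0 : 0 < δ) (hδ1 : δ < 1) (hg : |g - g'| ≤ 1)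
    {a b : EuclideanSpace ℝ ι} (hab : 1 < g → ‖a - b‖ ≤ α)
    {B : Set (EuclideanSpace ℝ ι)} (hB : MeasurableSet B) :
    ENNReal.ofReal (relProb ε δ g) * gaussianE a (noiseSD ε δ α ^ 2).toNNReal B
      ≤ ENNReal.ofReal (exp ε)
          * (ENNReal.ofReal (relProb ε δ g') * gaussianE b (noiseSD ε δ α ^ 2).toNNReal B)
        + ENNReal.ofReal δ := by
  rcases le_or_gt g 1 with hg1 | hg1
  · calc _ ≤ ENNReal.ofReal (relProb ε δ g) := mul_le_of_le_one_right' prob_le_one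
      _ ≤ ENNReal.ofReal δ := ENNReal.ofReal_le_ofReal (relProb_le_of_le_one hε0 hδ0 hg1)
      _ ≤ _ := le_add_self
  set E := ENNReal.ofReal (exp (ε / 2))
  have hE : ENNReal.ofReal (exp ε) = E * E := by
    rw [← ENNReal.ofReal_mul (exp_nonneg _), ← exp_add, add_halves]
  have hp : ENNReal.ofReal (relProb ε δ g) ≤ E * ENNReal.ofReal (relProb ε δ g') := by
    rw [← ENNReal.ofReal_mul (exp_nonneg _)]
    exact ENNReal.ofReal_le_ofReal (relProb_le_exp_mul hε0.le (by linarith [(abs_le.1 hg).2]))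
  have hp1 : ENNReal.ofReal (relProb ε δ g) ≤ 1 :=
    ENNReal.ofReal_le_one.2 (relProb_le_one ε δ g)
  calc _ ≤ ENNReal.ofReal (relProb ε δ g)
        * (E * gaussianE b (noiseSD ε δ α ^ 2).toNNReal B + ENNReal.ofReal δ) := by
          gcongr
          exact gaussianE_noiseSD_le hε0 hε1 hδ0 hδ1 (hab hg1) hB
    _ ≤ E * ENNReal.ofReal (relProb ε δ g')
          * (E * gaussianE b (noiseSD ε δ α ^ 2).toNNReal B) + 1 * ENNReal.ofReal δ := by
          rw [mul_add]
          gcongr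
    _ = _ := by rw [hE, one_mul]; ring

lemma ofReal_one_sub_relProb_mul_le {ε δ g g' : ℝ} (hε : 0 ≤ ε) (hg : |g - g'| ≤ 1)
    (x : ℝ≥0∞) :
    ENNReal.ofReal (1 - relProb ε δ g) * x
      ≤ ENNReal.ofReal (exp ε) * (ENNReal.ofReal (1 - relProb ε δ g') * x) := by
  rw [← mul_assoc, ← ENNReal.ofReal_mul (exp_nonneg _)]
  gcongr ?_ * _
  refine ENNReal.ofReal_le_ofReal
    ((one_sub_relProb_le_exp_mul (g := g) (g' := g') hε (by linarith [(abs_le.1 hg).1])).trans ?_)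
  gcongr
  · exact sub_nonneg.2 (relProb_le_one ε δ g')
  · linarith

end EPTR

theorem ePTR_isDP_general {Z : Type*} {n p : ℕ}
    {ε δ α : ℝ} (hε : ε ∈ Set.Ioo (0 : ℝ) 1) (hδ : δ ∈ Set.Ioo (0 : ℝ) 1)
    (θhat : (Fin n → Z) → EuclideanSpace ℝ (Fin p))
    (G : Set (Fin n → Z))
    (hG : ∀ X ∈ G, ∀ X' : Fin n → Z, EPTR.Neighbor X X' → ‖θhat X - θhat X'‖ ≤ α)
    (γ : (Fin n → Z) → ℝ)
    (hγLip : ∀ X X' : Fin n → Z, |γ X - γ X'| ≤ (EPTR.hDist X X' : ℝ))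
    (hγG : ∀ X, 0 < γ X → X ∈ G)
    (πbot : Measure (EuclideanSpace ℝ (Fin p))) :
    EPTR.IsDP (EPTR.ePTR ε δ α θhat γ πbot) ε δ := by
  intro X X' hXX' B hB
  have hγ : |γ X - γ X'| ≤ 1 := by
    simpa [show EPTR.hDist X X' = 1 from hXX'] using hγLip X X'
  have hreleased := EPTR.ofReal_relProb_mul_gaussianE_le hε.1 hε.2.le hδ.1 hδ.2 hγ
    (fun h => hG X (hγG X (by linarith)) X' hXX') hB
  have hrejected := EPTR.ofReal_one_sub_relProb_mul_le (δ := δ) hε.1.le hγ (πbot B)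
  simp only [EPTR.ePTR, Measure.add_apply, Measure.smul_apply, smul_eq_mul]
  calc _ ≤ _ := add_le_add hreleased hrejected
    _ = _ := by ring

/-- Theorem 2.1 (ePTR is DP): if `G` is a set of datasets on which the estimator `θhat` has
local sensitivity at most `α`, and `γ` is a sub-distance to `Gᶜ` (1-Lipschitz with respect to
the Hamming distance and positive only on `G`), then the ePTR mechanism built from
`(ε, δ, α, θhat, γ, πbot)` is `(ε, δ)`-differentially private. -/
theorem ePTR_isDP {Z : Type*} [MeasurableSpace Z] {n p : ℕ} (hn : 1 ≤ n) (hp : 1 ≤ p)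
    {ε δ α : ℝ} (hε : ε ∈ Set.Ioo (0 : ℝ) 1) (hδ : δ ∈ Set.Ioo (0 : ℝ) 1) (hα : 0 < α)
    (θhat : (Fin n → Z) → EuclideanSpace ℝ (Fin p)) (hθmeas : Measurable θhat)
    (G : Set (Fin n → Z))
    (hG : ∀ X ∈ G, ∀ X' : Fin n → Z, EPTR.Neighbor X X' → ‖θhat X - θhat X'‖ ≤ α)
    (γ : (Fin n → Z) → ℝ) (hγnonneg : ∀ X, 0 ≤ γ X)
    (hγLip : ∀ X X' : Fin n → Z, |γ X - γ X'| ≤ (EPTR.hDist X X' : ℝ))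
    (hγG : ∀ X, 0 < γ X → X ∈ G)
    (πbot : Measure (EuclideanSpace ℝ (Fin p))) [IsProbabilityMeasure πbot] :
    EPTR.IsDP (EPTR.ePTR ε δ α θhat γ πbot) ε δ :=
  ePTR_isDP_general hε hδ θhat G hG γ hγLip hγG πbot
end
end

section
/- Let ε ≥ 0 and let a, b ∈ ℝ satisfy |a − b| ≤ 1. Define q(t) = exp(εt/2)/(exp(εt/2) + 1). Then q(a) ≤ e^{ε/2}·q(b) and 1 − q(a) ≤ e^{ε/2}·(1 − q(b)). -/
/-!
The release probability is `q t = sigmoid (ε t / 2)`, and `1 - q t = sigmoid (-ε t / 2)`.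
Shifting the argument of the sigmoid up by `c ≥ 0` multiplies it by at most `exp c`, because
`exp c * sigmoid y = 1 / (exp (-c) + exp (-y - c))` has the smaller denominator. Since
`|a - b| ≤ 1`, both `± ε a / 2` exceed `± ε b / 2` by at most `ε / 2`.
-/

open Real

lemma Real.exp_div_exp_add_one (x : ℝ) : exp x / (exp x + 1) = sigmoid x := by
  rw [sigmoid_def, exp_neg]
  field_simp

lemma Real.sigmoid_add_le_exp_mul_sigmoid (y : ℝ) {c : ℝ} (hc : 0 ≤ c) :
    sigmoid (y + c) ≤ exp c * sigmoid y := by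
  have hexp : exp (-c) ≤ 1 := exp_le_one_iff.mpr (neg_nonpos.mpr hc)
  calc sigmoid (y + c) = (1 + exp (-y) * exp (-c))⁻¹ := by
        rw [sigmoid_def, neg_add, exp_add]
    _ ≤ (exp (-c) + exp (-y) * exp (-c))⁻¹ := by gcongr
    _ = exp c * sigmoid y := by
        rw [sigmoid_def, ← one_add_mul, mul_comm, mul_inv, exp_neg, inv_inv]

lemma Real.sigmoid_le_exp_mul_sigmoid_s3 {x y c : ℝ} (hxy : x ≤ y + c) (hc : 0 ≤ c) :
    sigmoid x ≤ exp c * sigmoid y :=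
  (sigmoid_le hxy).trans (sigmoid_add_le_exp_mul_sigmoid y hc)

/-- The randomized-test release probability `q(t) = exp(εt/2)/(exp(εt/2)+1)` changes by at
most a factor `e^{ε/2}` (in both directions `q` and `1 - q`) when its argument changes by at
most `1`. -/
theorem relProb_private {ε a b : ℝ} (hε : 0 ≤ ε) (hab : |a - b| ≤ 1) :
    Real.exp (ε * a / 2) / (Real.exp (ε * a / 2) + 1)
        ≤ Real.exp (ε / 2) * (Real.exp (ε * b / 2) / (Real.exp (ε * b / 2) + 1)) ∧
      1 - Real.exp (ε * a / 2) / (Real.exp (ε * a / 2) + 1)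
        ≤ Real.exp (ε / 2) * (1 - Real.exp (ε * b / 2) / (Real.exp (ε * b / 2) + 1)) := by
  obtain ⟨hba, hab⟩ := abs_le.mp hab
  simp only [exp_div_exp_add_one, ← sigmoid_neg]
  constructor <;> exact sigmoid_le_exp_mul_sigmoid_s3 (by nlinarith) (by positivity)
end

section
/- Let V be a real normed vector space, let a > 0, and for v ∈ V define the projection P_a(v) = (a/max(‖v‖, a))·v. Then for all v, v' ∈ V, ‖P_a(v) − P_a(v')‖ ≤ (2/max(‖v‖/a, 1))·‖v − v'‖. -/
noncomputable section

/-- Projection onto the closed ball of radius `a` in a normed space: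
`proj a v = (a / max ‖v‖ a) • v`. -/
def proj {V : Type*} [NormedAddCommGroup V] [Module ℝ V] (a : ℝ) (v : V) : V :=
  (a / max ‖v‖ a) • v

/-- Lemma A.1 ("rperturb"): the projection onto the ball of radius `a` satisfies
`‖P_a v - P_a v'‖ ≤ (2 / max (‖v‖/a) 1) * ‖v - v'‖`. -/
theorem proj_lipschitz {V : Type*} [NormedAddCommGroup V] [NormedSpace ℝ V]
    {a : ℝ} (ha : 0 < a) (v v' : V) :
    ‖proj a v - proj a v'‖ ≤ 2 / max (‖v‖ / a) 1 * ‖v - v'‖ := by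
  set c : ℝ := max ‖v‖ a with hc_def
  set c' : ℝ := max ‖v'‖ a with hc'_def
  have hc : 0 < c := lt_of_lt_of_le ha (le_max_right _ _)
  have hc' : 0 < c' := lt_of_lt_of_le ha (le_max_right _ _)
  have hmax : max (‖v‖ / a) 1 = c / a := by
    rw [hc_def]
    rw [show (1 : ℝ) = a / a by field_simp, max_div_div_right ha.le]
  have key : proj a v - proj a v' = (a / c) • (v - v') + (a / c - a / c') • v' := by
    simp only [proj, smul_sub, sub_smul, ← hc_def, ← hc'_def]
    abel
  have hcc : |c - c'| ≤ ‖v - v'‖ :=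
    (abs_max_sub_max_le_abs _ _ _).trans (abs_norm_sub_norm_le v v')
  have h3 : |a / c - a / c'| ≤ a * ‖v - v'‖ / (c * c') := by
    have heq : a / c - a / c' = a * (c' - c) / (c * c') := by
      field_simp
    rw [heq, abs_div, abs_mul, abs_of_pos ha, abs_of_pos (mul_pos hc hc')]
    gcongr
    rw [abs_sub_comm]
    exact hcc
  have h2 : ‖(a / c - a / c') • v'‖ ≤ a / c * ‖v - v'‖ := by
    rw [norm_smul]
    calc |a / c - a / c'| * ‖v'‖ ≤ (a * ‖v - v'‖ / (c * c')) * c' := by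
          apply mul_le_mul h3 (le_max_left _ _) (norm_nonneg _)
          positivity
      _ = a / c * ‖v - v'‖ := by field_simp
  have h1 : ‖(a / c) • (v - v')‖ = a / c * ‖v - v'‖ := by
    rw [norm_smul, Real.norm_eq_abs, abs_of_pos (by positivity)]
  calc ‖proj a v - proj a v'‖ ≤ ‖(a / c) • (v - v')‖ + ‖(a / c - a / c') • v'‖ := by
        rw [key]; exact norm_add_le _ _
    _ ≤ a / c * ‖v - v'‖ + a / c * ‖v - v'‖ := by rw [h1]; linarith
    _ = 2 / (c / a) * ‖v - v'‖ := by
        rw [div_div_eq_mul_div]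
        ring
    _ = 2 / max (‖v‖ / a) 1 * ‖v - v'‖ := by rw [hmax]
end
end

section
/- Fix n ≥ 1, K ≥ 1, p ≥ 1, R_x > 0 and a class index k ∈ {1,…,K}. Let X = ((x_1,y_1),…,(x_n,y_n)) with x_j ∈ ℝ^p, ‖x_j‖ ≤ R_x, and labels y_j ∈ {1,…,K}, and let X' be a neighbor of X obtained by replacing the single entry (x_i, y_i) with (x'_i, y'_i), where ‖x'_i‖ ≤ R_x and y'_i ∈ {1,…,K}. Let I_k(X) = {j : y_j = k} and, when I_k(X) ≠ ∅, let m̂_k(X) = (1/|I_k(X)|)·Σ_{j ∈ I_k(X)} x_j be the class-k sample mean. If I_k(X) ≠ ∅ and I_k(X') ≠ ∅, then ‖m̂_k(X) − m̂_k(X')‖ ≤ 2R_x / min(|I_k(X)|, |I_k(X')|). -/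
open MeasureTheory ProbabilityTheory Matrix
open scoped Classical NNReal ENNReal RealInnerProductSpace

noncomputable section

/-! The difference of sample means is controlled by the identity
`mean (insert i s) f - mean s f = (|s| + 1)⁻¹ • (f i - mean s f)`: moving one point into (or out of)
a class of size `m` shifts its mean by at most `2 R / m`, while replacing a point inside a class of
size `m` shifts it by `(f i - g i) / m`. -/

namespace Finset

variable {ι E : Type*} [NormedAddCommGroup E] [NormedSpace ℝ E]

def sampleMean (s : Finset ι) (f : ι → E) : E :=
  (#s : ℝ)⁻¹ • ∑ j ∈ s, f j

theorem norm_sampleMean_le {s : Finset ι} {f : ι → E} {R : ℝ} (hs : s.Nonempty)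
    (hf : ∀ j ∈ s, ‖f j‖ ≤ R) : ‖sampleMean s f‖ ≤ R := by
  have hcard : (#s : ℝ) ≠ 0 := by exact_mod_cast hs.card_pos.ne'
  calc ‖sampleMean s f‖ = (#s : ℝ)⁻¹ * ‖∑ j ∈ s, f j‖ := by
        rw [sampleMean, norm_smul, norm_inv, Real.norm_natCast]
    _ ≤ (#s : ℝ)⁻¹ * (#s * R) := by
        gcongr
        simpa using norm_sum_le_of_le s hf
    _ = R := by field_simp

theorem sampleMean_congr {s : Finset ι} {f g : ι → E} (hfg : ∀ j ∈ s, f j = g j) :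
    sampleMean s f = sampleMean s g := by
  rw [sampleMean, sampleMean, sum_congr rfl hfg]

theorem sampleMean_sub_sampleMean_of_eqOn_erase [DecidableEq ι] {s : Finset ι} {f g : ι → E}
    {i : ι} (hi : i ∈ s) (hfg : ∀ j ∈ s.erase i, f j = g j) :
    sampleMean s f - sampleMean s g = (#s : ℝ)⁻¹ • (f i - g i) := by
  rw [sampleMean, sampleMean, ← smul_sub, ← sum_sub_distrib,
    sum_eq_single_of_mem i hi fun j hj hji => by rw [hfg j (mem_erase.2 ⟨hji, hj⟩), sub_self]]

theorem sampleMean_insert_sub_sampleMean [DecidableEq ι] {s : Finset ι} {i : ι} (hi : i ∉ s)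
    (f : ι → E) :
    sampleMean (insert i s) f - sampleMean s f = ((#s + 1 : ℕ) : ℝ)⁻¹ • (f i - sampleMean s f) := by
  rcases s.eq_empty_or_nonempty with rfl | hs
  · simp [sampleMean]
  have hcard : (#s : ℝ) ≠ 0 := by exact_mod_cast hs.card_pos.ne'
  have hinv : (#s : ℝ)⁻¹ = (#s + 1 : ℝ)⁻¹ + (#s + 1 : ℝ)⁻¹ * (#s : ℝ)⁻¹ := by
    field_simp
  rw [sampleMean, sampleMean, card_insert_of_notMem hi, sum_insert hi]
  push_cast
  linear_combination (norm := module) -hinv • ∑ j ∈ s, f j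

theorem norm_sampleMean_insert_sub_le [DecidableEq ι] {s : Finset ι} {f g : ι → E} {i : ι}
    {R : ℝ} (hi : i ∉ s) (hs : s.Nonempty) (hfg : ∀ j ∈ s, f j = g j)
    (hf : ∀ j ∈ insert i s, ‖f j‖ ≤ R) :
    ‖sampleMean (insert i s) f - sampleMean s g‖ ≤ 2 * R / #s := by
  have hmean : ‖sampleMean s f‖ ≤ R := norm_sampleMean_le hs fun j hj => hf j (mem_insert_of_mem hj)
  have hfi : ‖f i‖ ≤ R := hf i (mem_insert_self i s)
  have hcard : (0 : ℝ) < #s := by exact_mod_cast hs.card_pos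
  rw [← sampleMean_congr hfg, sampleMean_insert_sub_sampleMean hi, norm_smul, norm_inv,
    Real.norm_natCast]
  calc ((#s + 1 : ℕ) : ℝ)⁻¹ * ‖f i - sampleMean s f‖ ≤ ((#s + 1 : ℕ) : ℝ)⁻¹ * (2 * R) := by
        gcongr
        linarith [norm_sub_le (f i) (sampleMean s f)]
    _ ≤ 2 * R / #s := by
        rw [inv_mul_eq_div]
        gcongr
        · linarith [norm_nonneg (f i)]
        · linarith

theorem norm_sampleMean_sub_sampleMean_le [DecidableEq ι] {s t : Finset ι} {f g : ι → E}
    {R : ℝ} (i : ι) (hst : ∀ j, j ≠ i → (j ∈ s ↔ j ∈ t)) (hfg : ∀ j, j ≠ i → f j = g j)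
    (hf : ∀ j ∈ s, ‖f j‖ ≤ R) (hg : ∀ j ∈ t, ‖g j‖ ≤ R) (hs : s.Nonempty) (ht : t.Nonempty) :
    ‖sampleMean s f - sampleMean t g‖ ≤ 2 * R / (min #s #t : ℕ) := by
  by_cases his : i ∈ s <;> by_cases hit : i ∈ t
  · obtain rfl : s = t := ext fun j => by
      rcases eq_or_ne j i with rfl | hj
      · exact iff_of_true his hit
      · exact hst j hj
    rw [sampleMean_sub_sampleMean_of_eqOn_erase his fun j hj => hfg j (ne_of_mem_erase hj),
      norm_smul, norm_inv, Real.norm_natCast, min_self, inv_mul_eq_div]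
    gcongr
    linarith [norm_sub_le (f i) (g i), hf i his, hg i his]
  · have hs_eq : s = insert i t := ext fun j => by
      rcases eq_or_ne j i with rfl | hj
      · simp [his]
      · simp [hj, hst j hj]
    subst hs_eq
    rw [min_eq_right (card_le_card (subset_insert i t))]
    exact norm_sampleMean_insert_sub_le hit ht (fun j hj => hfg j (ne_of_mem_of_not_mem hj hit)) hf
  · have ht_eq : t = insert i s := ext fun j => by
      rcases eq_or_ne j i with rfl | hj
      · simp [hit]
      · simp [hj, hst j hj]
    subst ht_eq
    rw [min_eq_left (card_le_card (subset_insert i s)), norm_sub_rev]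
    exact norm_sampleMean_insert_sub_le his hs
      (fun j hj => (hfg j (ne_of_mem_of_not_mem hj his)).symm) hg
  · obtain rfl : s = t := ext fun j => by
      rcases eq_or_ne j i with rfl | hj
      · exact iff_of_false his hit
      · exact hst j hj
    obtain ⟨j, hj⟩ := hs
    rw [sampleMean_congr fun j hj => hfg j (ne_of_mem_of_not_mem hj his), sub_self, norm_zero]
    have : 0 ≤ R := (norm_nonneg _).trans (hf j hj)
    positivity

end Finset

theorem bayes_mean_sensitivity_general {n K p : ℕ}
    {Rx : ℝ} (k : Fin K) (i : Fin n)
    (X X' : Fin n → EuclideanSpace ℝ (Fin p) × Fin K)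
    (hX : ∀ j, ‖(X j).1‖ ≤ Rx) (hX'i : ‖(X' i).1‖ ≤ Rx)
    (hsame : ∀ j, j ≠ i → X' j = X j)
    (hIk : (EPTR.Ik X k).Nonempty) (hIk' : (EPTR.Ik X' k).Nonempty) :
    ‖EPTR.classMean X k - EPTR.classMean X' k‖
      ≤ 2 * Rx / ((min (EPTR.Ik X k).card (EPTR.Ik X' k).card : ℕ) : ℝ) := by
  have hX' : ∀ j, ‖(X' j).1‖ ≤ Rx := fun j => by
    rcases eq_or_ne j i with rfl | hj
    · exact hX'i
    · rw [hsame j hj]; exact hX j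
  exact Finset.norm_sampleMean_sub_sampleMean_le i
    (fun j hj => by simp [EPTR.Ik, hsame j hj]) (fun j hj => by rw [hsame j hj])
    (fun j _ => hX j) (fun j _ => hX' j) hIk hIk'

/-- Sensitivity of the class-`k` sample mean of the Bayes classifier: replacing a single
labeled data point (with features of norm at most `R_x`) changes `m̂_k` by at most
`2 R_x / min(|I_k(X)|, |I_k(X')|)`, provided both class-`k` index sets are nonempty. -/
theorem bayes_mean_sensitivity {n K p : ℕ} (hn : 1 ≤ n) (hK : 1 ≤ K) (hp : 1 ≤ p)
    {Rx : ℝ} (hRx : 0 < Rx) (k : Fin K) (i : Fin n)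
    (X X' : Fin n → EuclideanSpace ℝ (Fin p) × Fin K)
    (hX : ∀ j, ‖(X j).1‖ ≤ Rx) (hX'i : ‖(X' i).1‖ ≤ Rx)
    (hsame : ∀ j, j ≠ i → X' j = X j)
    (hIk : (EPTR.Ik X k).Nonempty) (hIk' : (EPTR.Ik X' k).Nonempty) :
    ‖EPTR.classMean X k - EPTR.classMean X' k‖
      ≤ 2 * Rx / ((min (EPTR.Ik X k).card (EPTR.Ik X' k).card : ℕ) : ℝ) :=
  bayes_mean_sensitivity_general k i X X' hX hX'i hsame hIk hIk'
end
end

section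
/- Fix n ≥ 1, K ≥ 1, p ≥ 1, R_x > 0 and c_0 > 0 with c_0·n ≥ 1. For a dataset X = ((x_1,y_1),…,(x_n,y_n)) with x_j ∈ ℝ^p, ‖x_j‖ ≤ R_x, y_j ∈ {1,…,K}, let I_k(X) = {j : y_j = k}, μ̂_k(X) = |I_k(X)|/n, m̂_k(X) = (1/|I_k(X)|)·Σ_{j ∈ I_k(X)} x_j when I_k(X) ≠ ∅ and m̂_k(X) = 0 otherwise, and define γ(X) = max( min_{k ≤ K} |I_k(X)| − c_0·n − 1, 0 ). Then: (i) for any neighboring datasets X, X', |γ(X) − γ(X')| ≤ 1; and (ii) if γ(X) > 0, then for every neighbor X' of X, ( Σ_{k=1}^K |μ̂_k(X) − μ̂_k(X')|² + Σ_{k=1}^K ‖m̂_k(X) − m̂_k(X')‖² )^{1/2} ≤ (2/n)·√(2R_x²/c_0² + 2). -/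
open MeasureTheory ProbabilityTheory Matrix
open scoped Classical NNReal ENNReal RealInnerProductSpace

noncomputable section

/-!
Changing one data point moves one index between two classes, so every class count changes by at
most one; hence so does their minimum, and `γ` is 1-Lipschitz. If `γ(X) > 0`, every class of `X`
(and of a neighbor `X'`) has more than `c₀ n` points. Only the two classes involved in the change
see their statistics move: each frequency by at most `1/n`, each mean by at most `2 R_x / (c₀ n)`,
because inserting or replacing one point of norm `≤ R_x` in an average over `m` points moves it by
at most `2 R_x / m`.
-/

theorem Nat.iInf_le_iInf_add {ι : Sort*} {f g : ι → ℕ} {m : ℕ} (h : ∀ i, f i ≤ g i + m) :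
    ⨅ i, f i ≤ (⨅ i, g i) + m := by
  cases isEmpty_or_nonempty ι with
  | inl _ => simp [Nat.iInf_of_empty]
  | inr _ =>
    obtain ⟨i, hi⟩ := ciInf_mem g
    calc ⨅ i, f i ≤ f i := ciInf_le (OrderBot.bddBelow _) i
      _ ≤ g i + m := h i
      _ = (⨅ i, g i) + m := by rw [hi]

theorem Fintype.sum_le_two_mul_of_forall_ne_eq_zero {ι : Type*} [Fintype ι] {f : ι → ℝ}
    {a b : ι} {B : ℝ} (hf : ∀ k, k ≠ a → k ≠ b → f k = 0) (hB : ∀ k, f k ≤ B) (hB₀ : 0 ≤ B) :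
    ∑ k, f k ≤ 2 * B := by
  rcases eq_or_ne a b with rfl | hab
  · rw [Fintype.sum_eq_single a fun k hk => hf k hk hk]
    linarith [hB a]
  · rw [Fintype.sum_eq_add a b hab fun k hk => hf k hk.1 hk.2]
    linarith [hB a, hB b]

section FinsetAverage

variable {ι V : Type*} [NormedAddCommGroup V] [NormedSpace ℝ V]

theorem norm_inv_card_smul_sum_le {s : Finset ι} {f : ι → V} {R : ℝ} (hR : 0 ≤ R)
    (hf : ∀ j ∈ s, ‖f j‖ ≤ R) : ‖(s.card : ℝ)⁻¹ • ∑ j ∈ s, f j‖ ≤ R := by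
  rcases s.eq_empty_or_nonempty with rfl | hs
  · simpa using hR
  have hcard : (0 : ℝ) < s.card := by exact_mod_cast hs.card_pos
  calc ‖(s.card : ℝ)⁻¹ • ∑ j ∈ s, f j‖ ≤ (s.card : ℝ)⁻¹ * ∑ j ∈ s, ‖f j‖ := by
        rw [norm_smul, norm_inv, Real.norm_natCast]
        gcongr
        exact norm_sum_le _ _
    _ ≤ (s.card : ℝ)⁻¹ * (s.card * R) := by
        gcongr
        simpa using Finset.sum_le_card_nsmul s _ R hf
    _ = R := by field_simp

theorem norm_inv_card_smul_sum_sub_le_of_forall_ne_eq {s : Finset ι} {j₀ : ι} (hj₀ : j₀ ∈ s)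
    {f g : ι → V} {R : ℝ} (hfg : ∀ j, j ≠ j₀ → f j = g j) (hf : ∀ j, ‖f j‖ ≤ R)
    (hg : ∀ j, ‖g j‖ ≤ R) :
    ‖(s.card : ℝ)⁻¹ • ∑ j ∈ s, f j - (s.card : ℝ)⁻¹ • ∑ j ∈ s, g j‖ ≤ 2 * R / s.card := by
  rw [← smul_sub, ← Finset.sum_sub_distrib, Finset.sum_eq_single_of_mem j₀ hj₀
    fun j _ hj => by rw [hfg j hj, sub_self], norm_smul, norm_inv, Real.norm_natCast,
    inv_mul_eq_div]
  gcongr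
  linarith [norm_sub_le (f j₀) (g j₀), hf j₀, hg j₀]

variable [DecidableEq ι]

theorem inv_card_smul_sum_insert_sub {s : Finset ι} {j₀ : ι} (hj₀ : j₀ ∉ s) (f : ι → V) :
    ((insert j₀ s).card : ℝ)⁻¹ • ∑ j ∈ insert j₀ s, f j - (s.card : ℝ)⁻¹ • ∑ j ∈ s, f j =
      ((s.card : ℝ) + 1)⁻¹ • (f j₀ - (s.card : ℝ)⁻¹ • ∑ j ∈ s, f j) := by
  rw [Finset.card_insert_of_notMem hj₀, Finset.sum_insert hj₀, Nat.cast_succ]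
  rcases s.eq_empty_or_nonempty with rfl | hs
  · simp
  have hcard : (s.card : ℝ) ≠ 0 := by exact_mod_cast hs.card_pos.ne'
  match_scalars
  · field_simp
  · field_simp
    ring

theorem norm_inv_card_smul_sum_insert_sub_le {s : Finset ι} {j₀ : ι} (hj₀ : j₀ ∉ s)
    {f : ι → V} {R : ℝ} (hf : ∀ j, ‖f j‖ ≤ R) :
    ‖((insert j₀ s).card : ℝ)⁻¹ • ∑ j ∈ insert j₀ s, f j - (s.card : ℝ)⁻¹ • ∑ j ∈ s, f j‖ ≤
      2 * R / (s.card + 1) := by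
  have hR : 0 ≤ R := (norm_nonneg _).trans (hf j₀)
  have hdev : ‖f j₀ - (s.card : ℝ)⁻¹ • ∑ j ∈ s, f j‖ ≤ 2 * R := by
    linarith [norm_sub_le (f j₀) ((s.card : ℝ)⁻¹ • ∑ j ∈ s, f j), hf j₀,
      norm_inv_card_smul_sum_le (s := s) hR fun j _ => hf j]
  rw [inv_card_smul_sum_insert_sub hj₀, norm_smul, norm_inv, Real.norm_of_nonneg (by positivity),
    inv_mul_eq_div]
  gcongr

theorem norm_inv_card_smul_sum_sub_le_of_forall_ne {s t : Finset ι} {j₀ : ι} {f g : ι → V}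
    {R c : ℝ} (hst : ∀ j, j ≠ j₀ → (j ∈ s ↔ j ∈ t)) (hfg : ∀ j, j ≠ j₀ → f j = g j)
    (hf : ∀ j, ‖f j‖ ≤ R) (hg : ∀ j, ‖g j‖ ≤ R) (hc : 0 < c) (hs : c + 1 ≤ s.card) :
    ‖(s.card : ℝ)⁻¹ • ∑ j ∈ s, f j - (t.card : ℝ)⁻¹ • ∑ j ∈ t, g j‖ ≤ 2 * R / c := by
  have hR : 0 ≤ R := (norm_nonneg _).trans (hf j₀)
  have hle (d : ℝ) (hd : c ≤ d) : 2 * R / d ≤ 2 * R / c :=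
    div_le_div_of_nonneg_left (by positivity) hc hd
  have hsum (u : Finset ι) (hu : j₀ ∉ u) : ∑ j ∈ u, f j = ∑ j ∈ u, g j :=
    Finset.sum_congr rfl fun j hj => hfg j (ne_of_mem_of_not_mem hj hu)
  have hext (h₀ : j₀ ∈ s ↔ j₀ ∈ t) : s = t := by
    ext j
    rcases eq_or_ne j j₀ with rfl | hj
    exacts [h₀, hst j hj]
  by_cases hs₀ : j₀ ∈ s <;> by_cases ht₀ : j₀ ∈ t
  · obtain rfl := hext (iff_of_true hs₀ ht₀)
    exact (norm_inv_card_smul_sum_sub_le_of_forall_ne_eq hs₀ hfg hf hg).trans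
      (hle _ (by linarith))
  · obtain rfl : s = insert j₀ t := by
      ext j
      rcases eq_or_ne j j₀ with rfl | hj
      · simpa using hs₀
      · simpa [hj] using hst j hj
    rw [Finset.card_insert_of_notMem ht₀, Nat.cast_succ] at hs
    rw [← hsum t ht₀]
    exact (norm_inv_card_smul_sum_insert_sub_le ht₀ hf).trans (hle _ (by linarith))
  · obtain rfl : t = insert j₀ s := by
      ext j
      rcases eq_or_ne j j₀ with rfl | hj
      · simpa using ht₀
      · simpa [hj] using (hst j hj).symm
    rw [norm_sub_rev, hsum s hs₀]
    exact (norm_inv_card_smul_sum_insert_sub_le hs₀ hg).trans (hle _ (by linarith))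
  · rw [hext (iff_of_false hs₀ ht₀), hsum t ht₀, sub_self, norm_zero]
    positivity

end FinsetAverage

namespace EPTR

theorem Neighbor.exists_forall_ne_eq {Z : Type*} {n : ℕ} {X X' : Fin n → Z}
    (h : Neighbor X X') : ∃ j₀, ∀ j, j ≠ j₀ → X j = X' j := by
  obtain ⟨j₀, hj₀⟩ := Finset.card_eq_one.mp h
  refine ⟨j₀, fun j hj => ?_⟩
  by_contra hne
  exact hj (Finset.mem_singleton.mp (hj₀ ▸ Finset.mem_filter.mpr ⟨Finset.mem_univ j, hne⟩))

section Classes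

variable {n K : ℕ} {E : Type*} {X X' : Fin n → E × Fin K} {j₀ : Fin n}

theorem mem_Ik {j : Fin n} {k : Fin K} : j ∈ Ik X k ↔ (X j).2 = k := by
  simp [Ik]

theorem mem_Ik_iff_of_ne (hXX' : ∀ j, j ≠ j₀ → X j = X' j) {j : Fin n} (hj : j ≠ j₀)
    (k : Fin K) : j ∈ Ik X k ↔ j ∈ Ik X' k := by
  simp [mem_Ik, hXX' j hj]

theorem Ik_eq_of_ne (hXX' : ∀ j, j ≠ j₀ → X j = X' j) {k : Fin K} (hk : (X j₀).2 ≠ k)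
    (hk' : (X' j₀).2 ≠ k) : Ik X k = Ik X' k := by
  ext j
  rcases eq_or_ne j j₀ with rfl | hj
  · simp [mem_Ik, hk, hk']
  · exact mem_Ik_iff_of_ne hXX' hj k

theorem card_Ik_le_card_Ik_add_one (hXX' : ∀ j, j ≠ j₀ → X j = X' j) (k : Fin K) :
    (Ik X k).card ≤ (Ik X' k).card + 1 := by
  have hsub : Ik X k ⊆ insert j₀ (Ik X' k) := fun j hj => by
    rcases eq_or_ne j j₀ with rfl | hne
    · exact Finset.mem_insert_self _ _
    · exact Finset.mem_insert_of_mem ((mem_Ik_iff_of_ne hXX' hne k).1 hj)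
  exact (Finset.card_le_card hsub).trans (Finset.card_insert_le _ _)

theorem abs_gammaBC_sub_le_one (c0 : ℝ) (hXX' : ∀ j, j ≠ j₀ → X j = X' j) :
    |gammaBC c0 X - gammaBC c0 X'| ≤ 1 := by
  have h₁ : ((⨅ k, (Ik X k).card : ℕ) : ℝ) ≤ (⨅ k, (Ik X' k).card : ℕ) + 1 := by
    exact_mod_cast Nat.iInf_le_iInf_add (card_Ik_le_card_Ik_add_one hXX')
  have h₂ : ((⨅ k, (Ik X' k).card : ℕ) : ℝ) ≤ (⨅ k, (Ik X k).card : ℕ) + 1 := by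
    exact_mod_cast Nat.iInf_le_iInf_add
      (card_Ik_le_card_Ik_add_one fun j hj => (hXX' j hj).symm)
  exact (abs_max_sub_max_le_abs _ _ _).trans (abs_le.2 ⟨by linarith, by linarith⟩)

theorem lt_card_Ik_of_gammaBC_pos {c0 : ℝ} (h : 0 < gammaBC c0 X) (k : Fin K) :
    c0 * n + 1 < (Ik X k).card := by
  have hmin : 0 < ((⨅ k, (Ik X k).card : ℕ) : ℝ) - c0 * n - 1 := by
    rw [gammaBC, lt_max_iff] at h
    exact h.resolve_right (lt_irrefl 0)
  have hle : ((⨅ k, (Ik X k).card : ℕ) : ℝ) ≤ (Ik X k).card := by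
    exact_mod_cast ciInf_le (OrderBot.bddBelow _) k
  linarith

theorem classFreq_eq_of_ne (hXX' : ∀ j, j ≠ j₀ → X j = X' j) {k : Fin K} (hk : (X j₀).2 ≠ k)
    (hk' : (X' j₀).2 ≠ k) : classFreq X k = classFreq X' k := by
  rw [classFreq, classFreq, Ik_eq_of_ne hXX' hk hk']

theorem abs_classFreq_sub_le (hXX' : ∀ j, j ≠ j₀ → X j = X' j) (k : Fin K) :
    |classFreq X k - classFreq X' k| ≤ 1 / n := by
  have h₁ : ((Ik X k).card : ℝ) ≤ (Ik X' k).card + 1 := by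
    exact_mod_cast card_Ik_le_card_Ik_add_one hXX' k
  have h₂ : ((Ik X' k).card : ℝ) ≤ (Ik X k).card + 1 := by
    exact_mod_cast card_Ik_le_card_Ik_add_one (fun j hj => (hXX' j hj).symm) k
  rw [classFreq, classFreq, ← sub_div, abs_div, Nat.abs_cast]
  exact div_le_div_of_nonneg_right (abs_le.2 ⟨by linarith, by linarith⟩) n.cast_nonneg

end Classes

section Means

variable {n K p : ℕ} {X X' : Fin n → EuclideanSpace ℝ (Fin p) × Fin K} {j₀ : Fin n}

theorem classMean_eq_of_ne (hXX' : ∀ j, j ≠ j₀ → X j = X' j) {k : Fin K} (hk : (X j₀).2 ≠ k)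
    (hk' : (X' j₀).2 ≠ k) : classMean X k = classMean X' k := by
  rw [classMean, classMean, Ik_eq_of_ne hXX' hk hk']
  congr 1
  refine Finset.sum_congr rfl fun j hj => ?_
  have hj₀ : j ≠ j₀ := by
    rintro rfl
    exact hk' (mem_Ik.1 hj)
  rw [hXX' j hj₀]

theorem norm_classMean_sub_le (hXX' : ∀ j, j ≠ j₀ → X j = X' j) {R c : ℝ}
    (hX : ∀ j, ‖(X j).1‖ ≤ R) (hX' : ∀ j, ‖(X' j).1‖ ≤ R) (hc : 0 < c) {k : Fin K}
    (hk : c + 1 ≤ (Ik X k).card) : ‖classMean X k - classMean X' k‖ ≤ 2 * R / c :=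
  norm_inv_card_smul_sum_sub_le_of_forall_ne (fun _ hj => mem_Ik_iff_of_ne hXX' hj k)
    (fun j hj => congrArg Prod.fst (hXX' j hj)) hX hX' hc hk

end Means

end EPTR

theorem bayes_subdistance_and_sensitivity_general {n K p : ℕ}
    {Rx c0 : ℝ} (hc0n : 1 ≤ c0 * n) :
    (∀ X X' : Fin n → EuclideanSpace ℝ (Fin p) × Fin K, EPTR.Neighbor X X' →
        |EPTR.gammaBC c0 X - EPTR.gammaBC c0 X'| ≤ 1) ∧
      ∀ X X' : Fin n → EuclideanSpace ℝ (Fin p) × Fin K,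
        (∀ j, ‖(X j).1‖ ≤ Rx) → (∀ j, ‖(X' j).1‖ ≤ Rx) →
        EPTR.Neighbor X X' → 0 < EPTR.gammaBC c0 X →
        Real.sqrt (∑ k, (EPTR.classFreq X k - EPTR.classFreq X' k) ^ 2
            + ∑ k, ‖EPTR.classMean X k - EPTR.classMean X' k‖ ^ 2)
          ≤ 2 / n * Real.sqrt (2 * Rx ^ 2 / c0 ^ 2 + 2) := by
  refine ⟨fun X X' hXX' => ?_, fun X X' hX hX' hXX' hγ => ?_⟩
  · obtain ⟨j₀, hj₀⟩ := hXX'.exists_forall_ne_eq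
    exact EPTR.abs_gammaBC_sub_le_one c0 hj₀
  obtain ⟨j₀, hj₀⟩ := hXX'.exists_forall_ne_eq
  have hfreq : ∑ k, (EPTR.classFreq X k - EPTR.classFreq X' k) ^ 2 ≤ 2 * (1 / n) ^ 2 := by
    refine Fintype.sum_le_two_mul_of_forall_ne_eq_zero (a := (X j₀).2) (b := (X' j₀).2)
      (fun k ha hb => ?_) (fun k => ?_) (by positivity)
    · simp [EPTR.classFreq_eq_of_ne hj₀ ha.symm hb.symm]
    · rw [← sq_abs]
      gcongr
      exact EPTR.abs_classFreq_sub_le hj₀ k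
  have hmean : ∑ k, ‖EPTR.classMean X k - EPTR.classMean X' k‖ ^ 2
      ≤ 2 * (2 * Rx / (c0 * n)) ^ 2 := by
    refine Fintype.sum_le_two_mul_of_forall_ne_eq_zero (a := (X j₀).2) (b := (X' j₀).2)
      (fun k ha hb => ?_) (fun k => ?_) (by positivity)
    · simp [EPTR.classMean_eq_of_ne hj₀ ha.symm hb.symm]
    · gcongr
      exact EPTR.norm_classMean_sub_le hj₀ hX hX' (by linarith)
        (EPTR.lt_card_Ik_of_gammaBC_pos hγ k).le
  have hrhs : (2 / n * Real.sqrt (2 * Rx ^ 2 / c0 ^ 2 + 2)) ^ 2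
      = 2 * (2 * Rx / (c0 * n)) ^ 2 + 8 * (1 / n) ^ 2 := by
    rw [mul_pow, Real.sq_sqrt (by positivity)]
    ring
  rw [Real.sqrt_le_left (by positivity), hrhs]
  linarith [sq_nonneg (1 / (n : ℝ))]

/-- The sub-distance `γ(X) = max(min_k |I_k(X)| - c₀n - 1, 0)` of the ePTR Bayes classifier is
1-Lipschitz with respect to the neighbor relation, and on `{γ > 0}` the concatenated statistic
`(μ̂_1,…,μ̂_K, m̂_1,…,m̂_K)` has local sensitivity at most `(2/n)·√(2R_x²/c₀² + 2)`. -/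
theorem bayes_subdistance_and_sensitivity {n K p : ℕ} (hn : 1 ≤ n) (hK : 1 ≤ K) (hp : 1 ≤ p)
    {Rx c0 : ℝ} (hRx : 0 < Rx) (hc0 : 0 < c0) (hc0n : 1 ≤ c0 * n) :
    (∀ X X' : Fin n → EuclideanSpace ℝ (Fin p) × Fin K, EPTR.Neighbor X X' →
        |EPTR.gammaBC c0 X - EPTR.gammaBC c0 X'| ≤ 1) ∧
      ∀ X X' : Fin n → EuclideanSpace ℝ (Fin p) × Fin K,
        (∀ j, ‖(X j).1‖ ≤ Rx) → (∀ j, ‖(X' j).1‖ ≤ Rx) →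
        EPTR.Neighbor X X' → 0 < EPTR.gammaBC c0 X →
        Real.sqrt (∑ k, (EPTR.classFreq X k - EPTR.classFreq X' k) ^ 2
            + ∑ k, ‖EPTR.classMean X k - EPTR.classMean X' k‖ ^ 2)
          ≤ 2 / n * Real.sqrt (2 * Rx ^ 2 / c0 ^ 2 + 2) :=
  bayes_subdistance_and_sensitivity_general hc0n
end
end

section
/- Fix d ≥ 1, σ > 0, C_K > 0, R_f > 0, x_0 ∈ ℝ^d, and a measurable kernel K_σ : ℝ^d × ℝ^d → ℝ with |K_σ(x, x')| ≤ σ^{−d}·C_K for all x, x'. Let X = ((x_1,y_1),…,(x_n,y_n)) with x_j ∈ ℝ^d and |y_j| ≤ R_f, and let X' be obtained from X by replacing the single entry (x_i, y_i) with (x'_i, y'_i), |y'_i| ≤ R_f. Define d_σ(x_0, X) = Σ_j K_σ(x_0, x_j) and, when d_σ(x_0,X) ≠ 0, the Nadaraya–Watson estimate f̂(x_0, X) = Σ_j K_σ(x_0, x_j) y_j / d_σ(x_0, X). Then: (i) |d_σ(x_0, X) − d_σ(x_0, X')| ≤ 2σ^{−d}C_K; and (ii) if d_σ(x_0,X) ≠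 0 and d_σ(x_0,X') > 0, then |f̂(x_0,X) − f̂(x_0,X')| ≤ 2C_K σ^{−d}·(R_f + |f̂(x_0,X)|)/d_σ(x_0,X'), and, with Π_{R_f}(t) = (R_f/max(|t|,R_f))·t, |Π_{R_f}(f̂(x_0,X)) − Π_{R_f}(f̂(x_0,X'))| ≤ 8 R_f C_K σ^{−d} / d_σ(x_0, X'). -/
open MeasureTheory ProbabilityTheory Matrix
open scoped Classical NNReal ENNReal RealInnerProductSpace

noncomputable section

/-!
Only the `i`-th summands of the degree `D = Σ K(x₀, x_j)` and of the numerator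
`N = Σ K(x₀, x_j) y_j` change, by at most `2A` and `2A R_f` respectively, where `A = σ^{-d} C_K`.
Writing `N/D - N'/D' = ((N/D)(D' - D) + (N - N')) / D'` gives the bound on the estimate.
Clipping is `1`-Lipschitz, which suffices when `|f̂| ≤ 3R_f`; when `|f̂| > 3R_f`, either
`D' ≤ 4A`, and the trivial bound `2R_f` suffices, or the estimate moves by less than
`|f̂| - R_f` and both estimates are clipped to the same endpoint.
-/

open Finset Set

lemma norm_sum_sub_sum_le_of_eq_off {ι E : Type*} [Fintype ι] [SeminormedAddCommGroup E]
    {f g : ι → E} {B : ℝ} (i : ι) (hfg : ∀ j, j ≠ i → g j = f j) (hf : ‖f i‖ ≤ B)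
    (hg : ‖g i‖ ≤ B) :
    ‖∑ j, f j - ∑ j, g j‖ ≤ 2 * B := by
  rw [← sum_sub_distrib, Fintype.sum_eq_single i fun j hj => by rw [hfg j hj, sub_self]]
  linarith [norm_sub_le (f i) (g i)]

lemma abs_div_sub_div_le {N D N' D' a b : ℝ} (hD : D ≠ 0) (hD' : 0 < D')
    (hDa : |D - D'| ≤ a) (hNa : |N - N'| ≤ a * b) :
    |N / D - N' / D'| ≤ a * (b + |N / D|) / D' := by
  have hsplit : N / D - N' / D' = (N / D * (D' - D) + (N - N')) / D' := by
    field_simp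
    ring
  rw [hsplit, abs_div, abs_of_pos hD']
  gcongr
  calc |N / D * (D' - D) + (N - N')| ≤ |N / D| * |D' - D| + |N - N'| := by
        rw [← abs_mul]; exact abs_add_le _ _
    _ ≤ |N / D| * a + a * b := by rw [abs_sub_comm] at hDa; gcongr
    _ = a * (b + |N / D|) := by ring

namespace Set

variable {R : ℝ} (hR : -R ≤ R)
include hR

lemma projIcc_neg_eq_projIcc_of_abs_sub_le {f f' : ℝ} (h : |f - f'| ≤ |f| - R) :
    projIcc (-R) R hR f = projIcc (-R) R hR f' := by
  have h₀ := abs_nonneg (f - f')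
  rcases le_total 0 f with hf | hf
  · rw [abs_of_nonneg hf] at h
    rw [projIcc_of_right_le hR (by linarith),
      projIcc_of_right_le hR (by linarith [le_abs_self (f - f')])]
  · rw [abs_of_nonpos hf] at h
    rw [projIcc_of_le_left hR (by linarith),
      projIcc_of_le_left hR (by linarith [neg_abs_le (f - f')])]

lemma abs_projIcc_neg_sub_projIcc_le {δ D f f' : ℝ} (hδ : 0 ≤ δ) (hD : 0 < D)
    (h : |f - f'| ≤ δ * (R + |f|) / D) :
    |(projIcc (-R) R hR f : ℝ) - projIcc (-R) R hR f'| ≤ 4 * R * δ / D := by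
  have hR₀ : 0 ≤ R := by linarith
  rcases le_or_gt |f| (3 * R) with hf | hf
  · calc _ ≤ |f - f'| := abs_projIcc_sub_projIcc hR
      _ ≤ δ * (R + |f|) / D := h
      _ ≤ 4 * R * δ / D := div_le_div_of_nonneg_right (by nlinarith) hD.le
  rcases le_or_gt D (2 * δ) with hD₂ | hD₂
  · calc _ ≤ R - -R := Real.dist_le_of_mem_Icc (projIcc _ _ hR f).2 (projIcc _ _ hR f').2
      _ ≤ 4 * R * δ / D := by rw [le_div_iff₀ hD]; nlinarith
  · have hmove : |f - f'| ≤ |f| - R := by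
      refine h.trans ?_
      rw [div_le_iff₀ hD]
      nlinarith
    rw [projIcc_neg_eq_projIcc_of_abs_sub_le hR hmove, sub_self, abs_zero]
    positivity

end Set

lemma EPTR.proj_real_eq_projIcc {a : ℝ} (ha : -a ≤ a) (t : ℝ) :
    EPTR.proj a t = projIcc (-a) a ha t := by
  have ha₀ : 0 ≤ a := by linarith
  rw [EPTR.proj, Real.norm_eq_abs, smul_eq_mul]
  rcases le_total |t| a with ht | ht
  · rw [max_eq_right ht, projIcc_of_mem ha (abs_le.1 ht)]
    rcases ha₀.eq_or_lt with rfl | ha₀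
    · obtain rfl := abs_nonpos_iff.1 ht
      simp
    · rw [div_self ha₀.ne', one_mul]
  rw [max_eq_left ht]
  rcases le_total 0 t with ht₀ | ht₀
  · rw [abs_of_nonneg ht₀] at ht ⊢
    rw [projIcc_of_right_le ha ht, div_mul_cancel_of_imp fun h => by linarith]
  · rw [abs_of_nonpos ht₀] at ht ⊢
    rw [projIcc_of_le_left ha (by linarith)]
    calc a / -t * t = -(a / -t * -t) := by ring
      _ = -a := by rw [div_mul_cancel_of_imp fun h => by linarith]

namespace NadarayaWatson

variable {ι E : Type*} [Fintype ι]

def degree (K : E → E → ℝ) (x₀ : E) (X : ι → E × ℝ) : ℝ :=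
  ∑ j, K x₀ (X j).1

def estimate (K : E → E → ℝ) (x₀ : E) (X : ι → E × ℝ) : ℝ :=
  (∑ j, K x₀ (X j).1 * (X j).2) / degree K x₀ X

variable {K : E → E → ℝ} {x₀ : E} {A R : ℝ} {X X' : ι → E × ℝ} {i : ι}

lemma abs_degree_sub_degree_le (hK : ∀ x, |K x₀ x| ≤ A) (hXX' : ∀ j, j ≠ i → X' j = X j) :
    |degree K x₀ X - degree K x₀ X'| ≤ 2 * A :=
  norm_sum_sub_sum_le_of_eq_off (f := fun j => K x₀ (X j).1) (g := fun j => K x₀ (X' j).1) i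
    (fun j hj => by rw [hXX' j hj]) (hK _) (hK _)

lemma abs_estimate_sub_estimate_le (hK : ∀ x, |K x₀ x| ≤ A) (hY : |(X i).2| ≤ R)
    (hY' : |(X' i).2| ≤ R) (hXX' : ∀ j, j ≠ i → X' j = X j) (hD : degree K x₀ X ≠ 0)
    (hD' : 0 < degree K x₀ X') :
    |estimate K x₀ X - estimate K x₀ X'| ≤
      2 * A * (R + |estimate K x₀ X|) / degree K x₀ X' := by
  have hA : 0 ≤ A := (abs_nonneg _).trans (hK (X i).1)
  have hterm : ∀ Y : ι → E × ℝ, |(Y i).2| ≤ R → ‖K x₀ (Y i).1 * (Y i).2‖ ≤ A * R :=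
    fun Y hy => by
      rw [Real.norm_eq_abs, abs_mul]
      exact mul_le_mul (hK _) hy (abs_nonneg _) hA
  refine abs_div_sub_div_le hD hD' (abs_degree_sub_degree_le hK hXX') ?_
  calc _ ≤ 2 * (A * R) :=
        norm_sum_sub_sum_le_of_eq_off (f := fun j => K x₀ (X j).1 * (X j).2)
          (g := fun j => K x₀ (X' j).1 * (X' j).2) i (fun j hj => by rw [hXX' j hj])
          (hterm X hY) (hterm X' hY')
    _ = 2 * A * R := by ring

end NadarayaWatson

theorem nw_sensitivity_general {d n : ℕ}
    {σ CK Rf : ℝ}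
    (x0 : EuclideanSpace ℝ (Fin d))
    (Kσ : EuclideanSpace ℝ (Fin d) → EuclideanSpace ℝ (Fin d) → ℝ)
    (hKb : ∀ x x', |Kσ x x'| ≤ σ ^ (-(d : ℤ)) * CK)
    (i : Fin n) (X X' : Fin n → EuclideanSpace ℝ (Fin d) × ℝ)
    (hY : ∀ j, |(X j).2| ≤ Rf) (hY'i : |(X' i).2| ≤ Rf)
    (hsame : ∀ j, j ≠ i → X' j = X j) :
    |(∑ j, Kσ x0 (X j).1) - ∑ j, Kσ x0 (X' j).1| ≤ 2 * σ ^ (-(d : ℤ)) * CK ∧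
      ((∑ j, Kσ x0 (X j).1) ≠ 0 → 0 < ∑ j, Kσ x0 (X' j).1 →
        |(∑ j, Kσ x0 (X j).1 * (X j).2) / (∑ j, Kσ x0 (X j).1)
              - (∑ j, Kσ x0 (X' j).1 * (X' j).2) / (∑ j, Kσ x0 (X' j).1)|
            ≤ 2 * CK * σ ^ (-(d : ℤ)) *
                (Rf + |(∑ j, Kσ x0 (X j).1 * (X j).2) / (∑ j, Kσ x0 (X j).1)|) /
                  (∑ j, Kσ x0 (X' j).1) ∧
          |EPTR.proj Rf ((∑ j, Kσ x0 (X j).1 * (X j).2) / (∑ j, Kσ x0 (X j).1))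
                - EPTR.proj Rf ((∑ j, Kσ x0 (X' j).1 * (X' j).2) / (∑ j, Kσ x0 (X' j).1))|
            ≤ 8 * Rf * CK * σ ^ (-(d : ℤ)) / (∑ j, Kσ x0 (X' j).1)) := by
  have hRf : -Rf ≤ Rf := by linarith [(abs_nonneg _).trans hY'i]
  have hδ : 0 ≤ 2 * (σ ^ (-(d : ℤ)) * CK) := by linarith [(abs_nonneg _).trans (hKb x0 x0)]
  have hdeg := NadarayaWatson.abs_degree_sub_degree_le (hKb x0) hsame
  refine ⟨hdeg.trans_eq (by ring), fun hD hD' => ?_⟩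
  have hest := NadarayaWatson.abs_estimate_sub_estimate_le (hKb x0) (hY i) hY'i hsame hD hD'
  dsimp only [NadarayaWatson.estimate, NadarayaWatson.degree] at hest
  refine ⟨hest.trans_eq (by ring), ?_⟩
  rw [EPTR.proj_real_eq_projIcc hRf, EPTR.proj_real_eq_projIcc hRf]
  exact (Set.abs_projIcc_neg_sub_projIcc_le hRf hδ hD' hest).trans_eq (by ring)

/-- Local sensitivity of the Nadaraya–Watson estimator: replacing a single data point changes
the degree function `d_σ(x₀, X) = Σ_j K_σ(x₀, x_j)` by at most `2σ^{-d}C_K`, and when the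
degree functions are nonzero (resp. positive) the NW estimate changes by at most
`2C_Kσ^{-d}(R_f + |f̂(x₀, X)|)/d_σ(x₀, X')`; after clipping to `[-R_f, R_f]` the change is at
most `8R_fC_Kσ^{-d}/d_σ(x₀, X')`. -/
theorem nw_sensitivity {d n : ℕ} (hd : 1 ≤ d) (hn : 1 ≤ n)
    {σ CK Rf : ℝ} (hσ : 0 < σ) (hCK : 0 < CK) (hRf : 0 < Rf)
    (x0 : EuclideanSpace ℝ (Fin d))
    (Kσ : EuclideanSpace ℝ (Fin d) → EuclideanSpace ℝ (Fin d) → ℝ)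
    (hKmeas : Measurable fun z : EuclideanSpace ℝ (Fin d) × EuclideanSpace ℝ (Fin d) =>
      Kσ z.1 z.2)
    (hKb : ∀ x x', |Kσ x x'| ≤ σ ^ (-(d : ℤ)) * CK)
    (i : Fin n) (X X' : Fin n → EuclideanSpace ℝ (Fin d) × ℝ)
    (hY : ∀ j, |(X j).2| ≤ Rf) (hY'i : |(X' i).2| ≤ Rf)
    (hsame : ∀ j, j ≠ i → X' j = X j) :
    |(∑ j, Kσ x0 (X j).1) - ∑ j, Kσ x0 (X' j).1| ≤ 2 * σ ^ (-(d : ℤ)) * CK ∧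
      ((∑ j, Kσ x0 (X j).1) ≠ 0 → 0 < ∑ j, Kσ x0 (X' j).1 →
        |(∑ j, Kσ x0 (X j).1 * (X j).2) / (∑ j, Kσ x0 (X j).1)
              - (∑ j, Kσ x0 (X' j).1 * (X' j).2) / (∑ j, Kσ x0 (X' j).1)|
            ≤ 2 * CK * σ ^ (-(d : ℤ)) *
                (Rf + |(∑ j, Kσ x0 (X j).1 * (X j).2) / (∑ j, Kσ x0 (X j).1)|) /
                  (∑ j, Kσ x0 (X' j).1) ∧
          |EPTR.proj Rf ((∑ j, Kσ x0 (X j).1 * (X j).2) / (∑ j, Kσ x0 (X j).1))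
                - EPTR.proj Rf ((∑ j, Kσ x0 (X' j).1 * (X' j).2) / (∑ j, Kσ x0 (X' j).1))|
            ≤ 8 * Rf * CK * σ ^ (-(d : ℤ)) / (∑ j, Kσ x0 (X' j).1)) :=
  nw_sensitivity_general x0 Kσ hKb i X X' hY hY'i hsame
end
end

section
/- For every integer s ≥ 1 there exist real numbers a_1,…,a_s and a constant C > 0 such that the function K : ℝ → ℝ defined by K(u) = Σ_{i=1}^s a_i·(2π i²)^{−1/2}·exp(−u²/(2i²)) satisfies: (i) ∫_ℝ K(u) du = 1; (ii) ∫_ℝ u^j K(u) du = 0 for every j = 1, 2, …, 2s − 1; and (iii) |K(u)| ≤ C·exp(−u²/C) for all u ∈ ℝ. In particular, K is an even function and is a regular (one-dimensional) radial basis kernel of order 2s with bandwidth 1. -/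
open MeasureTheory Real

namespace HigherOrderKernel

/-- The `j`-th moment of the standard Gaussian weight, normalized. -/
noncomputable def c (j : ℕ) : ℝ :=
  (Real.sqrt (2 * Real.pi))⁻¹ * ∫ y : ℝ, y ^ j * Real.exp (-y ^ 2 / 2)

lemma integ (σ : ℝ) (hσ : 0 < σ) (j : ℕ) :
    Integrable fun u : ℝ => u ^ j * Real.exp (-u ^ 2 / (2 * σ ^ 2)) := by
  have hb : 0 < 1 / (2 * σ ^ 2) := by positivity
  have h := integrable_rpow_mul_exp_neg_mul_sq hb (s := (j : ℝ)) (by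
    have : (0:ℝ) ≤ (j:ℝ) := Nat.cast_nonneg j
    linarith)
  have : ∀ u : ℝ, u ^ ((j : ℝ)) * Real.exp (-(1 / (2 * σ ^ 2)) * u ^ 2)
      = u ^ j * Real.exp (-u ^ 2 / (2 * σ ^ 2)) := by
    intro u
    rw [Real.rpow_natCast]
    congr 1
    field_simp
  exact h.congr (Filter.Eventually.of_forall this)

lemma integ' (σ : ℝ) (hσ : 0 < σ) :
    Integrable fun u : ℝ => Real.exp (-u ^ 2 / (2 * σ ^ 2)) := by
  simpa using integ σ hσ 0

lemma moment (σ : ℝ) (hσ : 0 < σ) (j : ℕ) :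
    (∫ u : ℝ, u ^ j * ((Real.sqrt (2 * Real.pi * σ ^ 2))⁻¹ *
        Real.exp (-u ^ 2 / (2 * σ ^ 2)))) = σ ^ j * c j := by
  have hσ' : σ ≠ 0 := ne_of_gt hσ
  set g : ℝ → ℝ := fun u => u ^ j * ((Real.sqrt (2 * Real.pi * σ ^ 2))⁻¹ *
      Real.exp (-u ^ 2 / (2 * σ ^ 2))) with hg
  have h := Measure.integral_comp_mul_left g σ
  have hA : Real.sqrt (2 * Real.pi * σ ^ 2) = Real.sqrt (2 * Real.pi) * σ := by
    rw [Real.sqrt_mul (by positivity), Real.sqrt_sq hσ.le]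
  have hgval : ∀ x : ℝ, g (σ * x) = (σ ^ j * (Real.sqrt (2 * Real.pi * σ ^ 2))⁻¹) *
      (x ^ j * Real.exp (-x ^ 2 / 2)) := by
    intro x
    have hexp : -(σ * x) ^ 2 / (2 * σ ^ 2) = -x ^ 2 / 2 := by
      field_simp
    simp only [hg]
    rw [hexp, mul_pow]
    ring
  have h2 : (∫ x : ℝ, g (σ * x)) = (σ ^ j * (Real.sqrt (2 * Real.pi * σ ^ 2))⁻¹) *
      ∫ x : ℝ, x ^ j * Real.exp (-x ^ 2 / 2) := by
    rw [← integral_const_mul]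
    exact integral_congr_ae (Filter.Eventually.of_forall fun x => hgval x)
  have habs : |σ⁻¹| = σ⁻¹ := abs_of_pos (inv_pos.mpr hσ)
  rw [habs, smul_eq_mul] at h
  have h3 : (∫ y : ℝ, g y) = σ * (σ ^ j * (√(2 * π * σ ^ 2))⁻¹ *
      ∫ x : ℝ, x ^ j * Real.exp (-x ^ 2 / 2)) := by
    rw [← h2, h]
    field_simp
  rw [h3, hA, c]
  have hπ : Real.sqrt (2 * Real.pi) ≠ 0 := by positivity
  field_simp

lemma c0 : c 0 = 1 := by
  have h : ∀ y : ℝ, Real.exp (-y ^ 2 / 2) = Real.exp (-(2⁻¹ : ℝ) * y ^ 2) := by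
    intro y; congr 1; ring
  rw [c]
  simp only [pow_zero, one_mul]
  simp_rw [h]
  rw [integral_gaussian]
  rw [show Real.pi / 2⁻¹ = 2 * Real.pi by ring]
  rw [inv_mul_cancel₀ (by positivity)]

lemma c_odd (j : ℕ) (hj : Odd j) : c j = 0 := by
  suffices h : (∫ y : ℝ, y ^ j * Real.exp (-y ^ 2 / 2)) = 0 by
    rw [c, h, mul_zero]
  have key : ∀ x : ℝ, ((-1 : ℝ) * x) ^ j * Real.exp (-((-1 : ℝ) * x) ^ 2 / 2)
      = -(x ^ j * Real.exp (-x ^ 2 / 2)) := by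
    intro x
    rw [show ((-1 : ℝ) * x) = -x by ring, hj.neg_pow, neg_sq]
    ring
  have h := Measure.integral_comp_mul_left
    (fun y : ℝ => y ^ j * Real.exp (-y ^ 2 / 2)) (-1)
  simp only [key, integral_neg] at h
  simp only [inv_neg, inv_one, abs_neg, abs_one, one_smul] at h
  linarith

lemma int_Kj (s : ℕ) (a : Fin s → ℝ) (j : ℕ) :
    (∫ u : ℝ, u ^ j * ∑ i : Fin s, a i * (Real.sqrt (2 * Real.pi * ((i : ℝ) + 1) ^ 2))⁻¹ *
        Real.exp (-u ^ 2 / (2 * ((i : ℝ) + 1) ^ 2)))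
      = (∑ i : Fin s, a i * ((i : ℝ) + 1) ^ j) * c j := by
  have hpos : ∀ i : Fin s, (0 : ℝ) < (i : ℝ) + 1 := fun i => by positivity
  have heq : ∀ u : ℝ, (u ^ j * ∑ i : Fin s, a i *
        (Real.sqrt (2 * Real.pi * ((i : ℝ) + 1) ^ 2))⁻¹ *
        Real.exp (-u ^ 2 / (2 * ((i : ℝ) + 1) ^ 2)))
      = ∑ i : Fin s, a i * (u ^ j * ((Real.sqrt (2 * Real.pi * ((i : ℝ) + 1) ^ 2))⁻¹ *
        Real.exp (-u ^ 2 / (2 * ((i : ℝ) + 1) ^ 2)))) := by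
    intro u
    rw [Finset.mul_sum]
    exact Finset.sum_congr rfl fun i _ => by ring
  simp only [heq]
  rw [integral_finset_sum]
  · have hterm : ∀ i : Fin s, (∫ u : ℝ, a i * (u ^ j *
        ((Real.sqrt (2 * Real.pi * ((i : ℝ) + 1) ^ 2))⁻¹ *
        Real.exp (-u ^ 2 / (2 * ((i : ℝ) + 1) ^ 2)))))
        = a i * (((i : ℝ) + 1) ^ j * c j) := by
      intro i
      rw [integral_const_mul, moment ((i : ℝ) + 1) (hpos i) j]
    rw [Finset.sum_congr rfl fun i _ => hterm i, Finset.sum_mul]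
    exact Finset.sum_congr rfl fun i _ => by ring
  · intro i _
    have h := (integ ((i : ℝ) + 1) (hpos i) j).const_mul
      (a i * (Real.sqrt (2 * Real.pi * ((i : ℝ) + 1) ^ 2))⁻¹)
    exact h.congr (Filter.Eventually.of_forall fun u => by ring)

end HigherOrderKernel

/-- Lemma A.5 (construction of higher-order kernels from Gaussian densities): for every
`s ≥ 1` there are coefficients `a_1, …, a_s` and a constant `C > 0` such that
`K(u) = Σ_{i=1}^s a_i (2πi²)^{-1/2} exp(-u²/(2i²))` integrates to one, has vanishing moments
of orders `1, …, 2s - 1`, satisfies the Gaussian tail bound `|K(u)| ≤ C exp(-u²/C)`, and is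
even; i.e. `K` is a regular radial basis kernel of order `2s` with bandwidth `1`. -/
theorem exists_higher_order_kernel (s : ℕ) (hs : 1 ≤ s) :
    ∃ (a : Fin s → ℝ) (C : ℝ), 0 < C ∧
      (let K : ℝ → ℝ := fun u =>
        ∑ i, a i * (Real.sqrt (2 * Real.pi * ((i : ℝ) + 1) ^ 2))⁻¹ *
          Real.exp (-u ^ 2 / (2 * ((i : ℝ) + 1) ^ 2))
       (∫ u : ℝ, K u) = 1 ∧
        (∀ j ∈ Finset.Icc 1 (2 * s - 1), (∫ u : ℝ, u ^ j * K u) = 0) ∧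
        (∀ u, |K u| ≤ C * Real.exp (-u ^ 2 / C)) ∧
        ∀ u, K (-u) = K u) := by
  classical
  haveI : NeZero s := ⟨by omega⟩
  set v : Fin s → ℝ := fun i => ((i : ℝ) + 1) ^ 2 with hv
  have hvinj : Function.Injective v := by
    intro i j hij
    have h1 : (0 : ℝ) ≤ (i : ℝ) + 1 := by positivity
    have h2 : (0 : ℝ) ≤ (j : ℝ) + 1 := by positivity
    have hij' : ((i : ℝ) + 1) ^ 2 = ((j : ℝ) + 1) ^ 2 := hij
    have h3 : (i : ℝ) = (j : ℝ) := by nlinarith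
    have h4 : (i : ℕ) = (j : ℕ) := by exact_mod_cast h3
    exact Fin.ext h4
  set V := (Matrix.vandermonde v).transpose with hV
  have hdet : IsUnit V.det := by
    rw [hV, Matrix.det_transpose]
    exact (Matrix.det_vandermonde_ne_zero_iff.mpr hvinj).isUnit
  set b : Fin s → ℝ := fun m => if m = 0 then 1 else 0 with hb
  set a := (V⁻¹).mulVec b with ha
  have hVa : V.mulVec a = b := by
    rw [ha, Matrix.mulVec_mulVec, Matrix.mul_nonsing_inv _ hdet, Matrix.one_mulVec]
  have key : ∀ m : Fin s, (∑ i, a i * v i ^ (m : ℕ)) = if m = 0 then 1 else 0 := by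
    intro m
    have h := congrFun hVa m
    rw [hb] at h
    simpa [hV, Matrix.mulVec, dotProduct, Matrix.vandermonde, mul_comm] using h
  set S := ∑ i : Fin s, |a i| * (Real.sqrt (2 * Real.pi * ((i : ℝ) + 1) ^ 2))⁻¹ with hS
  have hSnn : 0 ≤ S := Finset.sum_nonneg fun i _ => by positivity
  set C : ℝ := 2 * (s : ℝ) ^ 2 + S + 1 with hC
  have hCpos : 0 < C := by positivity
  refine ⟨a, C, hCpos, ?_, ?_, ?_, ?_⟩
  · -- integral is 1
    have h0 := HigherOrderKernel.int_Kj s a 0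
    simp only [pow_zero, one_mul, mul_one] at h0
    rw [h0, HigherOrderKernel.c0, mul_one]
    have hk := key 0
    simp only [if_pos rfl, Fin.val_zero, pow_zero, mul_one] at hk
    exact hk
  · -- vanishing moments
    intro j hj
    obtain ⟨hj1, hj2⟩ := Finset.mem_Icc.mp hj
    rw [HigherOrderKernel.int_Kj s a j]
    rcases Nat.even_or_odd j with he | ho
    · obtain ⟨m, hm⟩ := he
      have hm1 : 1 ≤ m := by omega
      have hms : m < s := by omega
      have hsum : (∑ i : Fin s, a i * ((i : ℝ) + 1) ^ j)
          = ∑ i : Fin s, a i * v i ^ m := by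
        refine Finset.sum_congr rfl fun i _ => ?_
        rw [hv]
        rw [show j = 2 * m by omega, pow_mul]
      rw [hsum]
      have hk := key ⟨m, hms⟩
      have hne : (⟨m, hms⟩ : Fin s) ≠ 0 := by
        simp only [Ne, Fin.ext_iff, Fin.val_zero]
        omega
      rw [if_neg hne] at hk
      rw [hk, zero_mul]
    · rw [HigherOrderKernel.c_odd j ho, mul_zero]
  · -- tail bound
    intro u
    have hCge : ∀ i : Fin s, 2 * ((i : ℝ) + 1) ^ 2 ≤ C := by
      intro i
      have hi : ((i : ℝ) + 1) ≤ (s : ℝ) := by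
        have := i.isLt
        have : ((i : ℕ) : ℝ) + 1 ≤ (s : ℝ) := by exact_mod_cast Nat.succ_le_of_lt this
        exact this
      have hi0 : (0:ℝ) ≤ (i : ℝ) + 1 := by positivity
      rw [hC]
      nlinarith
    calc |∑ i : Fin s, a i * (Real.sqrt (2 * Real.pi * ((i : ℝ) + 1) ^ 2))⁻¹ *
          Real.exp (-u ^ 2 / (2 * ((i : ℝ) + 1) ^ 2))|
        ≤ ∑ i : Fin s, |a i * (Real.sqrt (2 * Real.pi * ((i : ℝ) + 1) ^ 2))⁻¹ *
          Real.exp (-u ^ 2 / (2 * ((i : ℝ) + 1) ^ 2))| := Finset.abs_sum_le_sum_abs _ _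
      _ ≤ ∑ i : Fin s, |a i| * (Real.sqrt (2 * Real.pi * ((i : ℝ) + 1) ^ 2))⁻¹ *
          Real.exp (-u ^ 2 / C) := by
          refine Finset.sum_le_sum fun i _ => ?_
          rw [abs_mul, abs_mul]
          have h1 : |(Real.sqrt (2 * Real.pi * ((i : ℝ) + 1) ^ 2))⁻¹|
              = (Real.sqrt (2 * Real.pi * ((i : ℝ) + 1) ^ 2))⁻¹ :=
            abs_of_nonneg (by positivity)
          have h2 : |Real.exp (-u ^ 2 / (2 * ((i : ℝ) + 1) ^ 2))|
              = Real.exp (-u ^ 2 / (2 * ((i : ℝ) + 1) ^ 2)) :=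
            abs_of_nonneg (Real.exp_nonneg _)
          rw [h1, h2]
          refine mul_le_mul_of_nonneg_left ?_ (by positivity)
          refine Real.exp_le_exp.mpr ?_
          rw [div_le_div_iff₀ (by positivity) hCpos]
          nlinarith [sq_nonneg u, hCge i]
      _ = S * Real.exp (-u ^ 2 / C) := by rw [hS, Finset.sum_mul]
      _ ≤ C * Real.exp (-u ^ 2 / C) := by
          refine mul_le_mul_of_nonneg_right ?_ (Real.exp_nonneg _)
          rw [hC]
          nlinarith [sq_nonneg (s : ℝ)]
  · -- even
    intro u
    simp only [neg_sq]
end
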